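/- arXiv:2404.04381 — 9 statements merged into one kernel-verified Lean document; each statement's English description precedes it below -/
import Mathlib

section
/- The class of finite H4-free 3-hypertournaments has the strong amalgamation property: given finite H4-free 3-hypertournaments A ⊆ B₁ and A ⊆ B₂ with B₁ ∩ B₂ = A, there exists an H4-free 3-hypertournament structure on B₁ ∪ B₂ extending both B₁ and B₂. -/
/-- A 3-hypertournament structure on the subset `S` of `V`. -/
def IsHTOn {V : Type*} (R : V → V → V → Prop) (S : Set V) : Prop :=
  (∀ a ∈ S, ∀ b ∈ S, ∀ c ∈ S, R a b c → a ≠ b ∧ b ≠ c ∧ a ≠ c) ∧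
  (∀ a ∈ S, ∀ b ∈ S, ∀ c ∈ S, R a b c → R b c a) ∧
  (∀ a ∈ S, ∀ b ∈ S, ∀ c ∈ S, a ≠ b → b ≠ c → a ≠ c → (¬ R a b c ↔ R c b a))

/-- No 4-element substructure inside `S` is isomorphic to H4. -/
def H4FreeOn {V : Type*} (R : V → V → V → Prop) (S : Set V) : Prop :=
  ∀ a ∈ S, ∀ b ∈ S, ∀ c ∈ S, ∀ d ∈ S, ¬ (R a b c ∧ R a c d ∧ R a d b ∧ R b d c)

/-- The "cyclically increasing" orientation of a triple with respect to a key function. -/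
def cyc3 {V : Type*} (key : V → ℕ) (x y z : V) : Prop :=
  (key x < key y ∧ key y < key z) ∨ (key y < key z ∧ key z < key x) ∨
    (key z < key x ∧ key x < key y)

theorem h4_amalg_aux {V : Type*} (B₁ B₂ : Set V)
    (R₁ R₂ : V → V → V → Prop)
    (hHT₁ : IsHTOn R₁ B₁) (hHT₂ : IsHTOn R₂ B₂)
    (hfree₁ : H4FreeOn R₁ B₁) (hfree₂ : H4FreeOn R₂ B₂)
    (hagree : ∀ a ∈ B₁ ∩ B₂, ∀ b ∈ B₁ ∩ B₂, ∀ c ∈ B₁ ∩ B₂, (R₁ a b c ↔ R₂ a b c))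
    (key : V → ℕ)
    (hkinj : ∀ x ∈ B₁ ∪ B₂, ∀ y ∈ B₁ ∪ B₂, key x = key y → x = y)
    (hk01 : ∀ v ∈ B₁, v ∉ B₂ → ∀ s ∈ B₁, s ∈ B₂ → key v < key s)
    (hk12 : ∀ s ∈ B₁, s ∈ B₂ → ∀ w ∈ B₂, w ∉ B₁ → key s < key w) :
    ∃ R : V → V → V → Prop,
      IsHTOn R (B₁ ∪ B₂) ∧ H4FreeOn R (B₁ ∪ B₂) ∧
        (∀ a ∈ B₁, ∀ b ∈ B₁, ∀ c ∈ B₁, (R a b c ↔ R₁ a b c)) ∧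
        (∀ a ∈ B₂, ∀ b ∈ B₂, ∀ c ∈ B₂, (R a b c ↔ R₂ a b c)) := by
  classical
  set R : V → V → V → Prop := fun x y z =>
    if x ∈ B₁ ∧ y ∈ B₁ ∧ z ∈ B₁ then R₁ x y z
    else if x ∈ B₂ ∧ y ∈ B₂ ∧ z ∈ B₂ then R₂ x y z
    else cyc3 key x y z with hRdef
  have hR1 : ∀ x y z, x ∈ B₁ → y ∈ B₁ → z ∈ B₁ → (R x y z ↔ R₁ x y z) := by
    intro x y z hx hy hz
    simp only [hRdef]
    rw [if_pos ⟨hx, hy, hz⟩]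
  have hR2 : ∀ x y z, x ∈ B₂ → y ∈ B₂ → z ∈ B₂ → (R x y z ↔ R₂ x y z) := by
    intro x y z hx hy hz
    by_cases t1 : x ∈ B₁ ∧ y ∈ B₁ ∧ z ∈ B₁
    · simp only [hRdef]
      rw [if_pos t1]
      exact hagree x ⟨t1.1, hx⟩ y ⟨t1.2.1, hy⟩ z ⟨t1.2.2, hz⟩
    · simp only [hRdef]
      rw [if_neg t1, if_pos ⟨hx, hy, hz⟩]
  have hRm : ∀ x y z, ¬(x ∈ B₁ ∧ y ∈ B₁ ∧ z ∈ B₁) → ¬(x ∈ B₂ ∧ y ∈ B₂ ∧ z ∈ B₂) →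
      (R x y z ↔ cyc3 key x y z) := by
    intro x y z h1 h2
    simp only [hRdef]
    rw [if_neg h1, if_neg h2]
  have hcyc : ∀ x y z, R x y z → R y z x := by
    intro x y z h
    by_cases t1 : x ∈ B₁ ∧ y ∈ B₁ ∧ z ∈ B₁
    · rw [hR1 x y z t1.1 t1.2.1 t1.2.2] at h
      rw [hR1 y z x t1.2.1 t1.2.2 t1.1]
      exact hHT₁.2.1 x t1.1 y t1.2.1 z t1.2.2 h
    · by_cases t2 : x ∈ B₂ ∧ y ∈ B₂ ∧ z ∈ B₂
      · rw [hR2 x y z t2.1 t2.2.1 t2.2.2] at h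
        rw [hR2 y z x t2.2.1 t2.2.2 t2.1]
        exact hHT₂.2.1 x t2.1 y t2.2.1 z t2.2.2 h
      · have t1' : ¬(y ∈ B₁ ∧ z ∈ B₁ ∧ x ∈ B₁) := fun ⟨p, q, s⟩ => t1 ⟨s, p, q⟩
        have t2' : ¬(y ∈ B₂ ∧ z ∈ B₂ ∧ x ∈ B₂) := fun ⟨p, q, s⟩ => t2 ⟨s, p, q⟩
        rw [hRm x y z t1 t2] at h
        rw [hRm y z x t1' t2']
        unfold cyc3 at h ⊢
        rcases h with h | h | h
        · exact Or.inr (Or.inr h)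
        · exact Or.inl h
        · exact Or.inr (Or.inl h)
  have hpart1 : ∀ a ∈ B₁ ∪ B₂, ∀ b ∈ B₁ ∪ B₂, ∀ c ∈ B₁ ∪ B₂,
      R a b c → a ≠ b ∧ b ≠ c ∧ a ≠ c := by
    intro a _ b _ c _ h
    by_cases t1 : a ∈ B₁ ∧ b ∈ B₁ ∧ c ∈ B₁
    · exact hHT₁.1 a t1.1 b t1.2.1 c t1.2.2 ((hR1 a b c t1.1 t1.2.1 t1.2.2).mp h)
    · by_cases t2 : a ∈ B₂ ∧ b ∈ B₂ ∧ c ∈ B₂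
      · exact hHT₂.1 a t2.1 b t2.2.1 c t2.2.2 ((hR2 a b c t2.1 t2.2.1 t2.2.2).mp h)
      · rw [hRm a b c t1 t2] at h
        have hk : key a ≠ key b ∧ key b ≠ key c ∧ key a ≠ key c := by
          unfold cyc3 at h
          rcases h with ⟨u, v⟩ | ⟨u, v⟩ | ⟨u, v⟩ <;> exact ⟨by omega, by omega, by omega⟩
        exact ⟨fun e => hk.1 (congrArg key e), fun e => hk.2.1 (congrArg key e),
          fun e => hk.2.2 (congrArg key e)⟩
  have hpart3 : ∀ a ∈ B₁ ∪ B₂, ∀ b ∈ B₁ ∪ B₂, ∀ c ∈ B₁ ∪ B₂,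
      a ≠ b → b ≠ c → a ≠ c → (¬ R a b c ↔ R c b a) := by
    intro a ha b hb c hc hab hbc hac
    by_cases t1 : a ∈ B₁ ∧ b ∈ B₁ ∧ c ∈ B₁
    · rw [hR1 a b c t1.1 t1.2.1 t1.2.2, hR1 c b a t1.2.2 t1.2.1 t1.1]
      exact hHT₁.2.2 a t1.1 b t1.2.1 c t1.2.2 hab hbc hac
    · by_cases t2 : a ∈ B₂ ∧ b ∈ B₂ ∧ c ∈ B₂
      · rw [hR2 a b c t2.1 t2.2.1 t2.2.2, hR2 c b a t2.2.2 t2.2.1 t2.1]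
        exact hHT₂.2.2 a t2.1 b t2.2.1 c t2.2.2 hab hbc hac
      · have t1' : ¬(c ∈ B₁ ∧ b ∈ B₁ ∧ a ∈ B₁) := fun ⟨p, q, s⟩ => t1 ⟨s, q, p⟩
        have t2' : ¬(c ∈ B₂ ∧ b ∈ B₂ ∧ a ∈ B₂) := fun ⟨p, q, s⟩ => t2 ⟨s, q, p⟩
        rw [hRm a b c t1 t2, hRm c b a t1' t2']
        have k1 : key a ≠ key b := fun e => hab (hkinj a ha b hb e)
        have k2 : key b ≠ key c := fun e => hbc (hkinj b hb c hc e)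
        have k3 : key a ≠ key c := fun e => hac (hkinj a ha c hc e)
        unfold cyc3
        omega
  have no3 : ∀ v x y z, cyc3 key v x y → cyc3 key v y z → cyc3 key v z x → False := by
    intro v x y z h1 h2 h3
    unfold cyc3 at h1 h2 h3
    rcases h1 with ⟨u1, u2⟩ | ⟨u1, u2⟩ | ⟨u1, u2⟩ <;>
      rcases h2 with ⟨v1, v2⟩ | ⟨v1, v2⟩ | ⟨v1, v2⟩ <;>
      rcases h3 with ⟨w1, w2⟩ | ⟨w1, w2⟩ | ⟨w1, w2⟩ <;> omega
  have mixedLink : ∀ v x y z,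
      ¬(v ∈ B₁ ∧ x ∈ B₁ ∧ y ∈ B₁) → ¬(v ∈ B₂ ∧ x ∈ B₂ ∧ y ∈ B₂) →
      ¬(v ∈ B₁ ∧ y ∈ B₁ ∧ z ∈ B₁) → ¬(v ∈ B₂ ∧ y ∈ B₂ ∧ z ∈ B₂) →
      ¬(v ∈ B₁ ∧ z ∈ B₁ ∧ x ∈ B₁) → ¬(v ∈ B₂ ∧ z ∈ B₂ ∧ x ∈ B₂) →
      R v x y → R v y z → R v z x → False := by
    intro v x y z n1 n2 n3 n4 n5 n6 f1 f2 f3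
    rw [hRm v x y n1 n2] at f1
    rw [hRm v y z n3 n4] at f2
    rw [hRm v z x n5 n6] at f3
    exact no3 v x y z f1 f2 f3
  have crossEdge : ∀ v w s, v ∈ B₁ → v ∉ B₂ → w ∈ B₂ → w ∉ B₁ → s ∈ B₁ → s ∈ B₂ →
      R v w s → False := by
    intro v w s hv1 hv2 hw2 hw1 hs1 hs2 h
    rw [hRm v w s (fun h' => hw1 h'.2.1) (fun h' => hv2 h'.1)] at h
    have l1 : key v < key s := hk01 v hv1 hv2 s hs1 hs2
    have l2 : key s < key w := hk12 s hs1 hs2 w hw2 hw1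
    unfold cyc3 at h
    omega
  have MAIN : ∀ a b c d, a ∈ B₁ ∪ B₂ → b ∈ B₁ ∪ B₂ → c ∈ B₁ ∪ B₂ → d ∈ B₁ ∪ B₂ →
      R a b c → R a c d → R a d b → R b d c → a ∉ B₁ → False := by
    intro a b c d ha hb hc hd h1 h2 h3 h4 ha1
    have ha2 : a ∈ B₂ := ((Set.mem_union a B₁ B₂).mp ha).resolve_left ha1
    have hb1r : R b c a := hcyc _ _ _ h1
    have hc1 : R c a b := hcyc _ _ _ hb1r
    have hc2 : R c d a := hcyc _ _ _ h2
    have hd2 : R d a c := hcyc _ _ _ hc2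
    have hd3 : R d b a := hcyc _ _ _ h3
    have hb3 : R b a d := hcyc _ _ _ hd3
    have hd4 : R d c b := hcyc _ _ _ h4
    have hc4 : R c b d := hcyc _ _ _ hd4
    by_cases hall2 : b ∈ B₂ ∧ c ∈ B₂ ∧ d ∈ B₂
    · exact hfree₂ a ha2 b hall2.1 c hall2.2.1 d hall2.2.2
        ⟨(hR2 a b c ha2 hall2.1 hall2.2.1).mp h1,
         (hR2 a c d ha2 hall2.2.1 hall2.2.2).mp h2,
         (hR2 a d b ha2 hall2.2.2 hall2.1).mp h3,
         (hR2 b d c hall2.1 hall2.2.2 hall2.2.1).mp h4⟩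
    · have hw : b ∉ B₂ ∨ c ∉ B₂ ∨ d ∉ B₂ := by tauto
      rcases hw with hw | hw | hw
      · -- b ∉ B₂, so b ∈ B₁
        have hbB1 : b ∈ B₁ := ((Set.mem_union b B₁ B₂).mp hb).resolve_right hw
        by_cases hcB2 : c ∈ B₂
        · by_cases hdB2 : d ∈ B₂
          · by_cases hcB1 : c ∈ B₁
            · by_cases hdB1 : d ∈ B₁
              · exact crossEdge b a d hbB1 hw ha2 ha1 hdB1 hdB2 hb3
              · exact mixedLink b c a d (fun h => ha1 h.2.2) (fun h => hw h.1)
                  (fun h => ha1 h.2.1) (fun h => hw h.1)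
                  (fun h => hdB1 h.2.1) (fun h => hw h.1) hb1r hb3 h4
            · exact mixedLink b c a d (fun h => hcB1 h.2.1) (fun h => hw h.1)
                (fun h => ha1 h.2.1) (fun h => hw h.1)
                (fun h => hcB1 h.2.2) (fun h => hw h.1) hb1r hb3 h4
          · exact mixedLink a b c d (fun h => ha1 h.1) (fun h => hw h.2.1)
              (fun h => ha1 h.1) (fun h => hdB2 h.2.2)
              (fun h => ha1 h.1) (fun h => hdB2 h.2.1) h1 h2 h3
        · exact mixedLink a b c d (fun h => ha1 h.1) (fun h => hw h.2.1)
            (fun h => ha1 h.1) (fun h => hcB2 h.2.1)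
            (fun h => ha1 h.1) (fun h => hw h.2.2) h1 h2 h3
      · -- c ∉ B₂, so c ∈ B₁
        have hcB1 : c ∈ B₁ := ((Set.mem_union c B₁ B₂).mp hc).resolve_right hw
        by_cases hbB2 : b ∈ B₂
        · by_cases hdB2 : d ∈ B₂
          · by_cases hbB1 : b ∈ B₁
            · by_cases hdB1 : d ∈ B₁
              · exact crossEdge c a b hcB1 hw ha2 ha1 hbB1 hbB2 hc1
              · exact mixedLink c a b d (fun h => ha1 h.2.1) (fun h => hw h.1)
                  (fun h => hdB1 h.2.2) (fun h => hw h.1)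
                  (fun h => hdB1 h.2.1) (fun h => hw h.1) hc1 hc4 hc2
            · exact mixedLink c a b d (fun h => ha1 h.2.1) (fun h => hw h.1)
                (fun h => hbB1 h.2.1) (fun h => hw h.1)
                (fun h => ha1 h.2.2) (fun h => hw h.1) hc1 hc4 hc2
          · exact mixedLink a b c d (fun h => ha1 h.1) (fun h => hw h.2.2)
              (fun h => ha1 h.1) (fun h => hw h.2.1)
              (fun h => ha1 h.1) (fun h => hdB2 h.2.1) h1 h2 h3
        · exact mixedLink a b c d (fun h => ha1 h.1) (fun h => hbB2 h.2.1)
            (fun h => ha1 h.1) (fun h => hw h.2.1)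
            (fun h => ha1 h.1) (fun h => hbB2 h.2.2) h1 h2 h3
      · -- d ∉ B₂, so d ∈ B₁
        have hdB1 : d ∈ B₁ := ((Set.mem_union d B₁ B₂).mp hd).resolve_right hw
        by_cases hbB2 : b ∈ B₂
        · by_cases hcB2 : c ∈ B₂
          · by_cases hbB1 : b ∈ B₁
            · by_cases hcB1 : c ∈ B₁
              · exact crossEdge d a c hdB1 hw ha2 ha1 hcB1 hcB2 hd2
              · exact mixedLink d a c b (fun h => hcB1 h.2.2) (fun h => hw h.1)
                  (fun h => hcB1 h.2.1) (fun h => hw h.1)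
                  (fun h => ha1 h.2.2) (fun h => hw h.1) hd2 hd4 hd3
            · exact mixedLink d a c b (fun h => ha1 h.2.1) (fun h => hw h.1)
                (fun h => hbB1 h.2.2) (fun h => hw h.1)
                (fun h => hbB1 h.2.1) (fun h => hw h.1) hd2 hd4 hd3
          · exact mixedLink a b c d (fun h => ha1 h.1) (fun h => hcB2 h.2.2)
              (fun h => ha1 h.1) (fun h => hcB2 h.2.1)
              (fun h => ha1 h.1) (fun h => hw h.2.1) h1 h2 h3
        · exact mixedLink a b c d (fun h => ha1 h.1) (fun h => hbB2 h.2.1)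
            (fun h => ha1 h.1) (fun h => hw h.2.2)
            (fun h => ha1 h.1) (fun h => hbB2 h.2.2) h1 h2 h3
  have hH4 : H4FreeOn R (B₁ ∪ B₂) := by
    intro a ha b hb c hc d hd h
    obtain ⟨h1, h2, h3, h4⟩ := h
    by_cases t1 : a ∈ B₁ ∧ b ∈ B₁ ∧ c ∈ B₁ ∧ d ∈ B₁
    · exact hfree₁ a t1.1 b t1.2.1 c t1.2.2.1 d t1.2.2.2
        ⟨(hR1 a b c t1.1 t1.2.1 t1.2.2.1).mp h1,
         (hR1 a c d t1.1 t1.2.2.1 t1.2.2.2).mp h2,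
         (hR1 a d b t1.1 t1.2.2.2 t1.2.1).mp h3,
         (hR1 b d c t1.2.1 t1.2.2.2 t1.2.2.1).mp h4⟩
    · have hb1r : R b c a := hcyc _ _ _ h1
      have hc1 : R c a b := hcyc _ _ _ hb1r
      have hc2 : R c d a := hcyc _ _ _ h2
      have hd2 : R d a c := hcyc _ _ _ hc2
      have hd3 : R d b a := hcyc _ _ _ h3
      have hb3 : R b a d := hcyc _ _ _ hd3
      have hd4 : R d c b := hcyc _ _ _ h4
      have hc4 : R c b d := hcyc _ _ _ hd4
      have hx : a ∉ B₁ ∨ b ∉ B₁ ∨ c ∉ B₁ ∨ d ∉ B₁ := by tauto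
      rcases hx with hx | hx | hx | hx
      · exact MAIN a b c d ha hb hc hd h1 h2 h3 h4 hx
      · exact MAIN b a d c hb ha hd hc hb3 h4 hb1r h2 hx
      · exact MAIN c d a b hc hd ha hb hc2 hc1 hc4 hd3 hx
      · exact MAIN d c b a hd hc hb ha hd4 hd3 hd2 hc1 hx
  exact ⟨R, ⟨hpart1, fun a _ b _ c _ => hcyc a b c, hpart3⟩, hH4,
    fun a ha b hb c hc => hR1 a b c ha hb hc,
    fun a ha b hb c hc => hR2 a b c ha hb hc⟩

/-- strong amalgamation for finite H4-free 3-hypertournaments: given finite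
H4-free 3-hypertournaments `B₁`, `B₂` agreeing on `A = B₁ ∩ B₂`, there is an H4-free
3-hypertournament structure on `B₁ ∪ B₂` extending both. -/
theorem stmt_4 {V : Type*} (B₁ B₂ : Set V) (hfin₁ : B₁.Finite) (hfin₂ : B₂.Finite)
    (R₁ R₂ : V → V → V → Prop)
    (hHT₁ : IsHTOn R₁ B₁) (hHT₂ : IsHTOn R₂ B₂)
    (hfree₁ : H4FreeOn R₁ B₁) (hfree₂ : H4FreeOn R₂ B₂)
    (hagree : ∀ a ∈ B₁ ∩ B₂, ∀ b ∈ B₁ ∩ B₂, ∀ c ∈ B₁ ∩ B₂, (R₁ a b c ↔ R₂ a b c)) :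
    ∃ R : V → V → V → Prop,
      IsHTOn R (B₁ ∪ B₂) ∧ H4FreeOn R (B₁ ∪ B₂) ∧
        (∀ a ∈ B₁, ∀ b ∈ B₁, ∀ c ∈ B₁, (R a b c ↔ R₁ a b c)) ∧
        (∀ a ∈ B₂, ∀ b ∈ B₂, ∀ c ∈ B₂, (R a b c ↔ R₂ a b c)) := by
  classical
  have hS : (B₁ ∪ B₂).Finite := hfin₁.union hfin₂
  haveI : Countable ↥(B₁ ∪ B₂) := hS.countable
  obtain ⟨f, hf⟩ := exists_injective_nat ↥(B₁ ∪ B₂)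
  set r : V → ℕ := fun v => if h : v ∈ B₁ ∪ B₂ then f ⟨v, h⟩ else 0 with hrdef
  have hrinj : ∀ x ∈ B₁ ∪ B₂, ∀ y ∈ B₁ ∪ B₂, r x = r y → x = y := by
    intro x hx y hy h
    simp only [hrdef, dif_pos hx, dif_pos hy] at h
    exact congrArg Subtype.val (hf h)
  obtain ⟨N, hN⟩ : ∃ N, ∀ v ∈ B₁ ∪ B₂, r v < N := by
    have h1 : (r '' (B₁ ∪ B₂)).Finite := hS.image r
    obtain ⟨M, hM⟩ := h1.bddAbove
    exact ⟨M + 1, fun v hv => Nat.lt_succ_of_le (hM (Set.mem_image_of_mem r hv))⟩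
  set key : V → ℕ := fun v => (if v ∈ B₁ then (if v ∈ B₂ then 1 else 0) else 2) * N + r v
    with hkey
  have hkinj : ∀ x ∈ B₁ ∪ B₂, ∀ y ∈ B₁ ∪ B₂, key x = key y → x = y := by
    intro x hx y hy h
    have hx' := hN x hx
    have hy' := hN y hy
    have hr : r x = r y → x = y := hrinj x hx y hy
    simp only [hkey] at h
    split_ifs at h <;> first | exact hr (by omega) | omega
  have hk01 : ∀ v ∈ B₁, v ∉ B₂ → ∀ s ∈ B₁, s ∈ B₂ → key v < key s := by
    intro v hv1 hv2 s hs1 hs2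
    have h1 := hN v (Set.mem_union_left _ hv1)
    simp only [hkey]
    rw [if_pos hv1, if_neg hv2, if_pos hs1, if_pos hs2]
    omega
  have hk12 : ∀ s ∈ B₁, s ∈ B₂ → ∀ w ∈ B₂, w ∉ B₁ → key s < key w := by
    intro s hs1 hs2 w hw2 hw1
    have h1 := hN s (Set.mem_union_left _ hs1)
    simp only [hkey]
    rw [if_pos hs1, if_pos hs2, if_neg hw1]
    omega
  exact h4_amalg_aux B₁ B₂ R₁ R₂ hHT₁ hHT₂ hfree₁ hfree₂ hagree key hkinj hk01 hk12
end

section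
/- One-point strong amalgamation for H4-free 3-hypertournaments: let A be a finite H4-free 3-hypertournament and let A ∪ {b₁} and A ∪ {b₂} be H4-free 3-hypertournaments extending A with b₁, b₂ ∉ A, b₁ ≠ b₂. Define a 3-hypertournament on A ∪ {b₁, b₂} extending both by setting R(b₁, b₂, a) for every a ∈ A. Then the resulting structure is H4-free. -/
/-- The amalgamated relation. -/
def amalgR {V : Type*} (A : Set V) (b₁ b₂ : V) (R₁ R₂ : V → V → V → Prop) :
    V → V → V → Prop := fun x y z =>
  ((x ∈ A ∨ x = b₁) ∧ (y ∈ A ∨ y = b₁) ∧ (z ∈ A ∨ z = b₁) ∧ R₁ x y z) ∨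
  ((x ∈ A ∨ x = b₂) ∧ (y ∈ A ∨ y = b₂) ∧ (z ∈ A ∨ z = b₂) ∧ R₂ x y z) ∨
  (x = b₁ ∧ y = b₂ ∧ z ∈ A) ∨ (x = b₂ ∧ y ∈ A ∧ z = b₁) ∨ (x ∈ A ∧ y = b₁ ∧ z = b₂)

section lemmas

variable {V : Type*} {A : Set V} {b₁ b₂ : V} {R₁ R₂ : V → V → V → Prop}

lemma amalg_pos1 (x : V) (hx : x ∈ A) : amalgR A b₁ b₂ R₁ R₂ b₁ b₂ x :=
  Or.inr (Or.inr (Or.inl ⟨rfl, rfl, hx⟩))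

lemma amalg_pos2 (x : V) (hx : x ∈ A) : amalgR A b₁ b₂ R₁ R₂ b₂ x b₁ :=
  Or.inr (Or.inr (Or.inr (Or.inl ⟨rfl, hx, rfl⟩)))

lemma amalg_pos3 (x : V) (hx : x ∈ A) : amalgR A b₁ b₂ R₁ R₂ x b₁ b₂ :=
  Or.inr (Or.inr (Or.inr (Or.inr ⟨hx, rfl, rfl⟩)))

lemma amalg_neg1 (hb₁ : b₁ ∉ A) (hb₂ : b₂ ∉ A) (hne : b₁ ≠ b₂) (x : V) :
    ¬ amalgR A b₁ b₂ R₁ R₂ b₂ b₁ x := by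
  rintro (⟨h | h, -, -, -⟩ | ⟨-, h | h, -, -⟩ | ⟨h, -, -⟩ | ⟨-, h, -⟩ | ⟨h, -, -⟩)
  exacts [hb₂ h, hne h.symm, hb₁ h, hne h, hne h.symm, hb₁ h, hb₂ h]

lemma amalg_neg2 (hb₁ : b₁ ∉ A) (hb₂ : b₂ ∉ A) (hne : b₁ ≠ b₂) (x : V) :
    ¬ amalgR A b₁ b₂ R₁ R₂ b₁ x b₂ := by
  rintro (⟨-, -, h | h, -⟩ | ⟨h | h, -, -, -⟩ | ⟨-, -, h⟩ | ⟨h, -, -⟩ | ⟨h, -, -⟩)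
  exacts [hb₂ h, hne h.symm, hb₁ h, hne h, hb₂ h, hne h, hb₁ h]

lemma amalg_neg3 (hb₁ : b₁ ∉ A) (hb₂ : b₂ ∉ A) (hne : b₁ ≠ b₂) (x : V) :
    ¬ amalgR A b₁ b₂ R₁ R₂ x b₂ b₁ := by
  rintro (⟨-, h | h, -, -⟩ | ⟨-, -, h | h, -⟩ | ⟨-, -, h⟩ | ⟨-, h, -⟩ | ⟨-, h, -⟩)
  exacts [hb₂ h, hne h.symm, hb₁ h, hne h, hb₁ h, hb₂ h, hne h.symm]

lemma amalg_ext1 (hb₁ : b₁ ∉ A) (hb₂ : b₂ ∉ A) (hne : b₁ ≠ b₂)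
    (hagree : ∀ a ∈ A, ∀ b ∈ A, ∀ c ∈ A, (R₁ a b c ↔ R₂ a b c))
    (a b c : V) (ha : a ∈ A ∨ a = b₁) (hb : b ∈ A ∨ b = b₁) (hc : c ∈ A ∨ c = b₁) :
    amalgR A b₁ b₂ R₁ R₂ a b c ↔ R₁ a b c := by
  have key : ∀ x : V, (x ∈ A ∨ x = b₁) → (x ∈ A ∨ x = b₂) → x ∈ A := by
    rintro x (h | rfl) h2
    · exact h
    · rcases h2 with h | h
      · exact absurd h hb₁
      · exact absurd h hne
  have nb2 : ∀ x : V, (x ∈ A ∨ x = b₁) → x ≠ b₂ := by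
    rintro x (h | rfl) rfl
    · exact hb₂ h
    · exact hne rfl
  constructor
  · rintro (⟨-, -, -, h⟩ | ⟨ha2, hb2, hc2, h⟩ | ⟨-, h, -⟩ | ⟨h, -, -⟩ | ⟨-, -, h⟩)
    · exact h
    · exact (hagree a (key a ha ha2) b (key b hb hb2) c (key c hc hc2)).mpr h
    · exact absurd h (nb2 b hb)
    · exact absurd h (nb2 a ha)
    · exact absurd h (nb2 c hc)
  · intro h; exact Or.inl ⟨ha, hb, hc, h⟩

lemma amalg_ext2 (hb₁ : b₁ ∉ A) (hb₂ : b₂ ∉ A) (hne : b₁ ≠ b₂)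
    (hagree : ∀ a ∈ A, ∀ b ∈ A, ∀ c ∈ A, (R₁ a b c ↔ R₂ a b c))
    (a b c : V) (ha : a ∈ A ∨ a = b₂) (hb : b ∈ A ∨ b = b₂) (hc : c ∈ A ∨ c = b₂) :
    amalgR A b₁ b₂ R₁ R₂ a b c ↔ R₂ a b c := by
  have key : ∀ x : V, (x ∈ A ∨ x = b₂) → (x ∈ A ∨ x = b₁) → x ∈ A := by
    rintro x (h | rfl) h2
    · exact h
    · rcases h2 with h | h
      · exact absurd h hb₂
      · exact absurd h.symm hne
  have nb1 : ∀ x : V, (x ∈ A ∨ x = b₂) → x ≠ b₁ := by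
    rintro x (h | rfl) rfl
    · exact hb₁ h
    · exact hne rfl
  constructor
  · rintro (⟨ha1, hb1, hc1, h⟩ | ⟨-, -, -, h⟩ | ⟨h, -, -⟩ | ⟨-, -, h⟩ | ⟨-, h, -⟩)
    · exact (hagree a (key a ha ha1) b (key b hb hb1) c (key c hc hc1)).mp h
    · exact h
    · exact absurd h (nb1 a ha)
    · exact absurd h (nb1 c hc)
    · exact absurd h (nb1 b hb)
  · intro h; exact Or.inr (Or.inl ⟨ha, hb, hc, h⟩)

end lemmas

/-- One-point strong amalgamation for H4-free 3-hypertournaments: the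
amalgam of `A ∪ {b₁}` and `A ∪ {b₂}` over `A` obtained by setting `R b₁ b₂ a` for all
`a ∈ A` is an H4-free 3-hypertournament on `A ∪ {b₁, b₂}`. -/
theorem stmt_5 {V : Type*} (A : Set V) (hA : A.Finite)
    (b₁ b₂ : V) (hb₁ : b₁ ∉ A) (hb₂ : b₂ ∉ A) (hne : b₁ ≠ b₂)
    (R₁ R₂ : V → V → V → Prop)
    (hHT₁ : IsHTOn R₁ (A ∪ {b₁})) (hfree₁ : H4FreeOn R₁ (A ∪ {b₁}))
    (hHT₂ : IsHTOn R₂ (A ∪ {b₂})) (hfree₂ : H4FreeOn R₂ (A ∪ {b₂}))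
    (hagree : ∀ a ∈ A, ∀ b ∈ A, ∀ c ∈ A, (R₁ a b c ↔ R₂ a b c)) :
    ∃ R : V → V → V → Prop,
      IsHTOn R (A ∪ {b₁, b₂}) ∧
        (∀ a ∈ A ∪ {b₁}, ∀ b ∈ A ∪ {b₁}, ∀ c ∈ A ∪ {b₁}, (R a b c ↔ R₁ a b c)) ∧
        (∀ a ∈ A ∪ {b₂}, ∀ b ∈ A ∪ {b₂}, ∀ c ∈ A ∪ {b₂}, (R a b c ↔ R₂ a b c)) ∧
        (∀ a ∈ A, R b₁ b₂ a) ∧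
        H4FreeOn R (A ∪ {b₁, b₂}) := by
  classical
  -- membership translations
  have m1 : ∀ x : V, x ∈ A ∪ {b₁} ↔ (x ∈ A ∨ x = b₁) := by intro x; simp; tauto
  have m2 : ∀ x : V, x ∈ A ∪ {b₂} ↔ (x ∈ A ∨ x = b₂) := by intro x; simp; tauto
  have mS : ∀ x : V, x ∈ A ∪ {b₁, b₂} ↔ (x ∈ A ∨ x = b₁ ∨ x = b₂) := by intro x; simp; tauto
  set R := amalgR A b₁ b₂ R₁ R₂ with hRdef
  have E1 := amalg_ext1 (R₂ := R₂) hb₁ hb₂ hne hagree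
  have E2 := amalg_ext2 (R₁ := R₁) hb₁ hb₂ hne hagree
  have p1 : ∀ x ∈ A, R b₁ b₂ x := fun x hx => amalg_pos1 x hx
  have p2 : ∀ x ∈ A, R b₂ x b₁ := fun x hx => amalg_pos2 x hx
  have p3 : ∀ x ∈ A, R x b₁ b₂ := fun x hx => amalg_pos3 x hx
  have n1 : ∀ x : V, ¬ R b₂ b₁ x := amalg_neg1 hb₁ hb₂ hne
  have n2 : ∀ x : V, ¬ R b₁ x b₂ := amalg_neg2 hb₁ hb₂ hne
  have n3 : ∀ x : V, ¬ R x b₂ b₁ := amalg_neg3 hb₁ hb₂ hne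
  refine ⟨R, ⟨?_, ?_, ?_⟩, ?_, ?_, fun a ha => p1 a ha, ?_⟩
  · -- distinctness
    intro a ha b hb c hc h
    rcases h with ⟨h1, h2, h3, h⟩ | ⟨h1, h2, h3, h⟩ | ⟨rfl, rfl, hz⟩ | ⟨rfl, hy, rfl⟩ |
      ⟨hx, rfl, rfl⟩
    · exact hHT₁.1 a ((m1 a).mpr h1) b ((m1 b).mpr h2) c ((m1 c).mpr h3) h
    · exact hHT₂.1 a ((m2 a).mpr h1) b ((m2 b).mpr h2) c ((m2 c).mpr h3) h
    · refine ⟨hne, ?_, ?_⟩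
      · rintro rfl; exact hb₂ hz
      · rintro rfl; exact hb₁ hz
    · refine ⟨?_, ?_, fun h => hne h.symm⟩
      · rintro rfl; exact hb₂ hy
      · rintro rfl; exact hb₁ hy
    · refine ⟨?_, hne, ?_⟩
      · rintro rfl; exact hb₁ hx
      · rintro rfl; exact hb₂ hx
  · -- cyclicity
    intro a ha b hb c hc h
    rcases h with ⟨h1, h2, h3, h⟩ | ⟨h1, h2, h3, h⟩ | ⟨e1, e2, hz⟩ | ⟨e1, hy, e3⟩ |
      ⟨hx, e2, e3⟩
    · exact Or.inl ⟨h2, h3, h1,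
        hHT₁.2.1 a ((m1 a).mpr h1) b ((m1 b).mpr h2) c ((m1 c).mpr h3) h⟩
    · exact Or.inr (Or.inl ⟨h2, h3, h1,
        hHT₂.2.1 a ((m2 a).mpr h1) b ((m2 b).mpr h2) c ((m2 c).mpr h3) h⟩)
    · exact Or.inr (Or.inr (Or.inr (Or.inl ⟨e2, hz, e1⟩)))
    · exact Or.inr (Or.inr (Or.inr (Or.inr ⟨hy, e3, e1⟩)))
    · exact Or.inr (Or.inr (Or.inl ⟨e2, e3, hx⟩))
  · -- trichotomy
    intro a ha b hb c hc hab hbc hac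
    by_cases k2 : a = b₂ ∨ b = b₂ ∨ c = b₂
    · by_cases k1 : a = b₁ ∨ b = b₁ ∨ c = b₁
      · rcases k1 with e1 | e1 | e1 <;> rcases k2 with e2 | e2 | e2
        · exact absurd (e1.symm.trans e2) hne
        · -- a = b₁, b = b₂
          subst e1; subst e2
          have cA : c ∈ A := by
            rcases (mS c).mp hc with h | h | h
            · exact h
            · exact absurd h.symm hac
            · exact absurd h.symm hbc
          exact iff_of_false (not_not_intro (p1 c cA)) (n3 c)
        · -- a = b₁, c = b₂
          subst e1; subst e2
          have bA : b ∈ A := by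
            rcases (mS b).mp hb with h | h | h
            · exact h
            · exact absurd h.symm hab
            · exact absurd h hbc
          exact iff_of_true (n2 b) (p2 b bA)
        · -- b = b₁, a = b₂
          subst e1; subst e2
          have cA : c ∈ A := by
            rcases (mS c).mp hc with h | h | h
            · exact h
            · exact absurd h.symm hbc
            · exact absurd h.symm hac
          exact iff_of_true (n1 c) (p3 c cA)
        · exact absurd (e1.symm.trans e2) hne
        · -- b = b₁, c = b₂
          subst e1; subst e2
          have aA : a ∈ A := by
            rcases (mS a).mp ha with h | h | h
            · exact h
            · exact absurd h hab
            · exact absurd h hac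
          exact iff_of_false (not_not_intro (p3 a aA)) (n1 a)
        · -- c = b₁, a = b₂
          subst e1; subst e2
          have bA : b ∈ A := by
            rcases (mS b).mp hb with h | h | h
            · exact h
            · exact absurd h hbc
            · exact absurd h.symm hab
          exact iff_of_false (not_not_intro (p2 b bA)) (n2 b)
        · -- c = b₁, b = b₂
          subst e1; subst e2
          have aA : a ∈ A := by
            rcases (mS a).mp ha with h | h | h
            · exact h
            · exact absurd h hac
            · exact absurd h hab
          exact iff_of_true (n3 a) (p1 a aA)
        · exact absurd (e1.symm.trans e2) hne
      · -- no b₁ among a, b, c : everything lives in A ∪ {b₂}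
        push_neg at k1
        have ma : a ∈ A ∨ a = b₂ := by
          rcases (mS a).mp ha with h | h | h
          exacts [Or.inl h, absurd h k1.1, Or.inr h]
        have mb : b ∈ A ∨ b = b₂ := by
          rcases (mS b).mp hb with h | h | h
          exacts [Or.inl h, absurd h k1.2.1, Or.inr h]
        have mc : c ∈ A ∨ c = b₂ := by
          rcases (mS c).mp hc with h | h | h
          exacts [Or.inl h, absurd h k1.2.2, Or.inr h]
        rw [hRdef, E2 a b c ma mb mc, E2 c b a mc mb ma]
        exact hHT₂.2.2 a ((m2 a).mpr ma) b ((m2 b).mpr mb) c ((m2 c).mpr mc) hab hbc hac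
    · -- no b₂ among a, b, c : everything lives in A ∪ {b₁}
      push_neg at k2
      have ma : a ∈ A ∨ a = b₁ := by
        rcases (mS a).mp ha with h | h | h
        exacts [Or.inl h, Or.inr h, absurd h k2.1]
      have mb : b ∈ A ∨ b = b₁ := by
        rcases (mS b).mp hb with h | h | h
        exacts [Or.inl h, Or.inr h, absurd h k2.2.1]
      have mc : c ∈ A ∨ c = b₁ := by
        rcases (mS c).mp hc with h | h | h
        exacts [Or.inl h, Or.inr h, absurd h k2.2.2]
      rw [hRdef, E1 a b c ma mb mc, E1 c b a mc mb ma]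
      exact hHT₁.2.2 a ((m1 a).mpr ma) b ((m1 b).mpr mb) c ((m1 c).mpr mc) hab hbc hac
  · -- extends R₁
    intro a ha b hb c hc
    exact E1 a b c ((m1 a).mp ha) ((m1 b).mp hb) ((m1 c).mp hc)
  · -- extends R₂
    intro a ha b hb c hc
    exact E2 a b c ((m2 a).mp ha) ((m2 b).mp hb) ((m2 c).mp hc)
  · -- H4-freeness
    rintro a ha b hb c hc d hd ⟨h1, h2, h3, h4⟩
    by_cases k2 : a = b₂ ∨ b = b₂ ∨ c = b₂ ∨ d = b₂
    · by_cases k1 : a = b₁ ∨ b = b₁ ∨ c = b₁ ∨ d = b₁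
      · rcases k1 with e1 | e1 | e1 | e1 <;> rcases k2 with e2 | e2 | e2 | e2
        · exact absurd (e1.symm.trans e2) hne
        · rw [e1, e2] at h3; exact n2 d h3
        · rw [e1, e2] at h1; exact n2 b h1
        · rw [e1, e2] at h2; exact n2 c h2
        · rw [e1, e2] at h1; exact n1 c h1
        · exact absurd (e1.symm.trans e2) hne
        · rw [e1, e2] at h4; exact n2 d h4
        · rw [e1, e2] at h3; exact n3 a h3
        · rw [e1, e2] at h2; exact n1 d h2
        · rw [e1, e2] at h1; exact n3 a h1
        · exact absurd (e1.symm.trans e2) hne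
        · rw [e1, e2] at h4; exact n3 b h4
        · rw [e1, e2] at h3; exact n1 b h3
        · rw [e1, e2] at h4; exact n1 c h4
        · rw [e1, e2] at h2; exact n3 a h2
        · exact absurd (e1.symm.trans e2) hne
      · -- no b₁: work in A ∪ {b₂}
        push_neg at k1
        have ma : a ∈ A ∨ a = b₂ := by
          rcases (mS a).mp ha with h | h | h
          exacts [Or.inl h, absurd h k1.1, Or.inr h]
        have mb : b ∈ A ∨ b = b₂ := by
          rcases (mS b).mp hb with h | h | h
          exacts [Or.inl h, absurd h k1.2.1, Or.inr h]
        have mc : c ∈ A ∨ c = b₂ := by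
          rcases (mS c).mp hc with h | h | h
          exacts [Or.inl h, absurd h k1.2.2.1, Or.inr h]
        have md : d ∈ A ∨ d = b₂ := by
          rcases (mS d).mp hd with h | h | h
          exacts [Or.inl h, absurd h k1.2.2.2, Or.inr h]
        exact hfree₂ a ((m2 a).mpr ma) b ((m2 b).mpr mb) c ((m2 c).mpr mc)
          d ((m2 d).mpr md)
          ⟨(E2 a b c ma mb mc).mp h1, (E2 a c d ma mc md).mp h2,
           (E2 a d b ma md mb).mp h3, (E2 b d c mb md mc).mp h4⟩
    · -- no b₂: work in A ∪ {b₁}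
      push_neg at k2
      have ma : a ∈ A ∨ a = b₁ := by
        rcases (mS a).mp ha with h | h | h
        exacts [Or.inl h, Or.inr h, absurd h k2.1]
      have mb : b ∈ A ∨ b = b₁ := by
        rcases (mS b).mp hb with h | h | h
        exacts [Or.inl h, Or.inr h, absurd h k2.2.1]
      have mc : c ∈ A ∨ c = b₁ := by
        rcases (mS c).mp hc with h | h | h
        exacts [Or.inl h, Or.inr h, absurd h k2.2.2.1]
      have md : d ∈ A ∨ d = b₁ := by
        rcases (mS d).mp hd with h | h | h
        exacts [Or.inl h, Or.inr h, absurd h k2.2.2.2]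
      exact hfree₁ a ((m1 a).mpr ma) b ((m1 b).mpr mb) c ((m1 c).mpr mc)
        d ((m1 d).mpr md)
        ⟨(E1 a b c ma mb mc).mp h1, (E1 a c d ma mc md).mp h2,
         (E1 a d b ma md mb).mp h3, (E1 b d c mb md mc).mp h4⟩
end

section
/- For every n, there exists a finite H4-free 3-hypertournament containing distinct elements a, b and a sequence c₀, …, c_{n-1} (all distinct from a, b and each other) such that R(cᵢ, cⱼ, a) and R(cᵢ, b, cⱼ) hold for all i < j. Explicitly, the structure defined by: R(cᵢ,cⱼ,a) ∧ R(cᵢ,b,cⱼ) for i<j, R(cᵢ,cⱼ,c_k) iff i<j<k, and R(cᵢ,b,a) for all i, is H4-free. -/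
set_option maxHeartbeats 2000000


/-- A 3-hypertournament structure on `V`. -/
def IsHT {V : Type*} (R : V → V → V → Prop) : Prop :=
  (∀ a b c : V, R a b c → a ≠ b ∧ b ≠ c ∧ a ≠ c) ∧
  (∀ a b c : V, R a b c → R b c a) ∧
  (∀ a b c : V, a ≠ b → b ≠ c → a ≠ c → (¬ R a b c ↔ R c b a))

/-- No 4 points form a copy of H4. -/
def H4Free {V : Type*} (R : V → V → V → Prop) : Prop :=
  ∀ a b c d : V, ¬ (R a b c ∧ R a c d ∧ R a d b ∧ R b d c)

/-- For every `n` there is a finite H4-free 3-hypertournament containing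
distinct `a`, `b` and a sequence `c₀, …, c_{n-1}` such that `R (c i) (c j) a` and
`R (c i) b (c j)` for `i < j`, with `R (c i) (c j) (c k)` iff `i<j<k` and `R (c i) b a`
for all `i`. -/
theorem stmt_7 (n : ℕ) :
    ∃ (V : Type) (_ : Fintype V) (R : V → V → V → Prop) (a b : V) (c : Fin n → V),
      IsHT R ∧ H4Free R ∧ a ≠ b ∧ Function.Injective c ∧
        (∀ i : Fin n, c i ≠ a ∧ c i ≠ b) ∧
        (∀ i j : Fin n, i < j → R (c i) (c j) a ∧ R (c i) b (c j)) ∧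
        (∀ i j k : Fin n, i < j → j < k → R (c i) (c j) (c k)) ∧
        (∀ i : Fin n, R (c i) b a) := by
  refine ⟨Fin (n + 2), inferInstance, fun x y z =>
      (x.val ≠ 1 ∧ y.val ≠ 1 ∧ z.val ≠ 1 ∧
        ((x.val < y.val ∧ y.val < z.val) ∨ (y.val < z.val ∧ z.val < x.val) ∨
          (z.val < x.val ∧ x.val < y.val))) ∨
      ((x.val = 1 ∨ y.val = 1 ∨ z.val = 1) ∧
        ((z.val < y.val ∧ y.val < x.val) ∨ (y.val < x.val ∧ x.val < z.val) ∨
          (x.val < z.val ∧ z.val < y.val))),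
    0, 1, fun i => ⟨i.val + 2, by omega⟩, ⟨?_, ?_, ?_⟩, ?_, ?_, ?_, ?_, ?_, ?_, ?_⟩
  · rintro a b c h
    refine ⟨fun e => ?_, fun e => ?_, fun e => ?_⟩ <;> subst e <;> omega
  · intro a b c h
    omega
  · intro a b c hab hbc hac
    simp only [Ne, Fin.ext_iff] at hab hbc hac
    constructor <;> intro h <;> omega
  · intro a b c d ⟨h1, h2, h3, h4⟩
    omega
  · intro h
    simp [Fin.ext_iff] at h
  · intro i j h
    simp only [Fin.mk.injEq] at h
    exact Fin.val_injective (by omega)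
  · intro i
    constructor <;> simp [Fin.ext_iff]
  · intro i j hij
    rw [Fin.lt_def] at hij
    constructor <;> simp <;> omega
  · intro i j k hij hjk
    rw [Fin.lt_def] at hij hjk
    simp
    omega
  · intro i
    simp
end

section
/- In an H4-free 3-hypertournament, let e, f, c, d, c', d' be elements with {c,d} and {c',d'} disjoint from each other and from {e,f}, such that both (c,d) and (c',d') satisfy: R(c,d,e) ∧ R(d,e,f) ∧ R(c,e,f) ∧ R(c,f,d) (and the same with c',d'), and additionally R(e,d',c) ∧ R(f,c,d'). Then there is no element x (distinct from all of the above) satisfying both R(x,c,d) ∧ R(x,d,e) ∧ R(x,e,f) ∧ R(x,c,f) ∧ R(x,e,c) ∧ R(x,f,d) and R(x,c',d') ∧ R(x,d',e) ∧ R(x,e,f) ∧ R(x,c',f) ∧ R(x,e,c') ∧ R(x,f,d'). -/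
/-- the 2-inconsistency step of the TP₂ proof for the H4-free
3-hypertournament. -/
theorem stmt_8 {V : Type*} (R : V → V → V → Prop) (hHT : IsHT R) (hfree : H4Free R)
    (e f c d c' d' : V)
    (hdist : ([e, f, c, d, c', d'] : List V).Pairwise (· ≠ ·))
    (h1 : R c d e ∧ R d e f ∧ R c e f ∧ R c f d)
    (h2 : R c' d' e ∧ R d' e f ∧ R c' e f ∧ R c' f d')
    (h3 : R e d' c ∧ R f c d') :
    ¬ ∃ x : V, x ∉ ({e, f, c, d, c', d'} : Set V) ∧
        (R x c d ∧ R x d e ∧ R x e f ∧ R x c f ∧ R x e c ∧ R x f d) ∧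
        (R x c' d' ∧ R x d' e ∧ R x e f ∧ R x c' f ∧ R x e c' ∧ R x f d') := by

  rintro ⟨x, hx, ⟨hxcd, hxde, hxef, hxcf, hxec, hxfd⟩,
    ⟨hxc'd', hxd'e, -, hxc'f, hxec', hxfd'⟩⟩
  obtain ⟨cyc⟩ := hHT.2
  simp only [Set.mem_insert_iff, Set.mem_singleton_iff, not_or] at hx
  obtain ⟨hxe, hxf, hxc, hxd, hxc', hxd'⟩ := hx
  have hcd' : c ≠ d' := by
    simp only [List.pairwise_cons] at hdist
    exact hdist.2.2.1 d' (by simp)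
  by_cases hkey : R x c d'
  · exact hfree e d' c x ⟨h3.1, cyc _ _ _ hxec,
      cyc _ _ _ (cyc _ _ _ hxd'e), cyc _ _ _ (cyc _ _ _ hkey)⟩
  · have hrev : R d' c x := (hHT.2.2 x c d' hxc hcd' hxd').1 hkey
    exact hfree f c d' x ⟨h3.2, cyc _ _ _ hxfd',
      cyc _ _ _ (cyc _ _ _ hxcf), cyc _ _ _ hrev⟩
end

section
/- NSOP4-style 4-cycle extension for H4-free 3-hypertournaments (combinatorial core): Let A be a finite H4-free 3-hypertournament, C ⊆ A, and b̄₀, b̄₁ disjoint n-tuples in A, each disjoint from C, such that (C, b̄₀) and (C, b̄₁) realize the same quantifier-free type. Then the H4-free 3-hypertournament A can be extended by a new n-tuple x̄ such that: (i) (b̄₁, x̄) realizes over C the same quantifier-free type as (b̄₀, b̄₁), (ii) R(cᵢ, b₀ⱼ, x_k) for all relevant indices, and (iii) R(b₀ᵢ, xⱼ, b₁ₖ) for all relevant indices; the resulting structure is H4-free. -/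
/-- The tuples `s` and `t` (indexed by `ι`) realize the same quantifier-free type over
the tuple `c` (indexed by `κ`): same equality pattern and same `R`-pattern. -/
def SameQF {V : Type*} (R : V → V → V → Prop) {ι κ : Type*} (c : κ → V) (s t : ι → V) :
    Prop :=
  (∀ i j : ι, s i = s j ↔ t i = t j) ∧
  (∀ (i : ι) (k : κ), s i = c k ↔ t i = c k) ∧
  (∀ u v w : ι ⊕ κ,
    R (Sum.elim s c u) (Sum.elim s c v) (Sum.elim s c w) ↔
      R (Sum.elim t c u) (Sum.elim t c v) (Sum.elim t c w))

section Stmt9Aux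

variable {V : Type} {m n : ℕ}

open Classical in
/-- The substitution map: `b₁ i ↦ b₀ i`, everything else fixed. -/
noncomputable def sigm (b₀ b₁ : Fin n → V) (v : V) : V :=
  if h : ∃ i, b₁ i = v then b₀ h.choose else v

open Classical in
/-- Layer of a point: `b₁`'s and `c`'s are layer 0, `b₀`'s are layer 1, rest layer 2. -/
noncomputable def lay (cbar : Fin m → V) (b₀ b₁ : Fin n → V) (v : V) : ℕ :=
  if (∃ i, b₁ i = v) ∨ (∃ k, cbar k = v) then 0
  else if ∃ i, b₀ i = v then 1 else 2

open Classical in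
/-- Orientation of a mixed triple `(u, v, x_k)` with `u, v` old. -/
noncomputable def DD (R : V → V → V → Prop) (cbar : Fin m → V) (b₀ b₁ : Fin n → V)
    (f : V → ℕ) (u v : V) (k : Fin n) : Prop :=
  if lay cbar b₀ b₁ u = lay cbar b₀ b₁ v then
    (if lay cbar b₀ b₁ u = 0 then R (sigm b₀ b₁ u) (sigm b₀ b₁ v) (b₁ k) else f u < f v)
  else lay cbar b₀ b₁ u < lay cbar b₀ b₁ v

/-- The extended relation on `V ⊕ Fin n`. -/
def RR (R : V → V → V → Prop) (cbar : Fin m → V) (b₀ b₁ : Fin n → V)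
    (f : V → ℕ) : V ⊕ Fin n → V ⊕ Fin n → V ⊕ Fin n → Prop
  | .inl a, .inl b, .inl c => R a b c
  | .inl a, .inl b, .inr k => a ≠ b ∧ DD R cbar b₀ b₁ f a b k
  | .inl u, .inr k, .inl v => v ≠ u ∧ DD R cbar b₀ b₁ f v u k
  | .inr k, .inl a, .inl b => a ≠ b ∧ DD R cbar b₀ b₁ f a b k
  | .inl u, .inr p, .inr q => p ≠ q ∧ R (sigm b₀ b₁ u) (b₁ p) (b₁ q)
  | .inr a, .inl u, .inr b => b ≠ a ∧ R (sigm b₀ b₁ u) (b₁ b) (b₁ a)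
  | .inr p, .inr q, .inl u => p ≠ q ∧ R (sigm b₀ b₁ u) (b₁ p) (b₁ q)
  | .inr p, .inr q, .inr r => R (b₁ p) (b₁ q) (b₁ r)

variable {R : V → V → V → Prop} {cbar : Fin m → V} {b₀ b₁ : Fin n → V} {f : V → ℕ}

lemma sigm_b1 (hinj₁ : Function.Injective b₁) (i : Fin n) : sigm b₀ b₁ (b₁ i) = b₀ i := by
  unfold sigm
  rw [dif_pos ⟨i, rfl⟩]
  exact congrArg b₀ (hinj₁ (Exists.choose_spec (⟨i, rfl⟩ : ∃ j, b₁ j = b₁ i)))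

lemma sigm_of {v : V} (h : ∀ i, b₁ i ≠ v) : sigm b₀ b₁ v = v :=
  dif_neg (fun ⟨i, hi⟩ => h i hi)

lemma sigm_ne_b1 (hdisj : ∀ i j, b₀ i ≠ b₁ j) (v : V) (k : Fin n) :
    sigm b₀ b₁ v ≠ b₁ k := by
  unfold sigm
  split
  · exact hdisj _ k
  · next h => exact fun hv => h ⟨k, hv.symm⟩

lemma lay_b1 (i : Fin n) : lay cbar b₀ b₁ (b₁ i) = 0 := if_pos (Or.inl ⟨i, rfl⟩)

lemma lay_c (k : Fin m) : lay cbar b₀ b₁ (cbar k) = 0 := if_pos (Or.inr ⟨k, rfl⟩)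

lemma lay_b0 (hdisj : ∀ i j, b₀ i ≠ b₁ j) (hc₀ : ∀ i k, b₀ i ≠ cbar k) (i : Fin n) :
    lay cbar b₀ b₁ (b₀ i) = 1 := by
  unfold lay
  rw [if_neg, if_pos ⟨i, rfl⟩]
  rintro (⟨j, hj⟩ | ⟨k, hk⟩)
  · exact hdisj i j hj.symm
  · exact hc₀ i k hk.symm

lemma lay0 {v : V} (h : lay cbar b₀ b₁ v = 0) :
    (∃ i, b₁ i = v) ∨ (∃ k, cbar k = v) := by
  by_contra hc
  unfold lay at h
  rw [if_neg hc] at h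
  split at h <;> simp at h

lemma code_ex (hinj₁ : Function.Injective b₁) (hc₁ : ∀ i k, b₁ i ≠ cbar k) {v : V}
    (h : lay cbar b₀ b₁ v = 0) :
    ∃ e : Fin n ⊕ Fin m, Sum.elim b₁ cbar e = v ∧ Sum.elim b₀ cbar e = sigm b₀ b₁ v := by
  rcases lay0 h with ⟨i, hi⟩ | ⟨k, hk⟩
  · exact ⟨.inl i, hi, by simp [← hi, sigm_b1 hinj₁]⟩
  · refine ⟨.inr k, hk, ?_⟩
    have : sigm b₀ b₁ v = v := sigm_of (fun i hiv => hc₁ i k (by rw [hiv, hk]))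
    simp [this, hk]

lemma subst0 (hinj₁ : Function.Injective b₁) (hc₁ : ∀ i k, b₁ i ≠ cbar k)
    (htp : SameQF R cbar b₀ b₁) {u v w : V}
    (hu : lay cbar b₀ b₁ u = 0) (hv : lay cbar b₀ b₁ v = 0) (hw : lay cbar b₀ b₁ w = 0) :
    R u v w ↔ R (sigm b₀ b₁ u) (sigm b₀ b₁ v) (sigm b₀ b₁ w) := by
  obtain ⟨eu, hu1, hu2⟩ := code_ex hinj₁ hc₁ hu
  obtain ⟨ev, hv1, hv2⟩ := code_ex hinj₁ hc₁ hv
  obtain ⟨ew, hw1, hw2⟩ := code_ex hinj₁ hc₁ hw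
  rw [← hu2, ← hv2, ← hw2, ← hu1, ← hv1, ← hw1]
  exact (htp.2.2 eu ev ew).symm

lemma sigm_inj0 (hinj₀ : Function.Injective b₀) (hinj₁ : Function.Injective b₁)
    (hc₀ : ∀ i k, b₀ i ≠ cbar k) {u v : V}
    (hu : lay cbar b₀ b₁ u = 0) (hv : lay cbar b₀ b₁ v = 0)
    (h : sigm b₀ b₁ u = sigm b₀ b₁ v) : u = v := by
  classical
  by_cases h1 : ∃ i, b₁ i = u <;> by_cases h2 : ∃ i, b₁ i = v
  · obtain ⟨i, rfl⟩ := h1; obtain ⟨j, rfl⟩ := h2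
    rw [sigm_b1 hinj₁, sigm_b1 hinj₁] at h
    rw [hinj₀ h]
  · obtain ⟨i, rfl⟩ := h1
    rcases lay0 hv with h2' | ⟨k, hk⟩
    · exact absurd h2' h2
    · rw [sigm_b1 hinj₁, sigm_of (fun j hj => h2 ⟨j, hj⟩)] at h
      exact absurd (h.trans hk.symm) (hc₀ i k)
  · obtain ⟨i, rfl⟩ := h2
    rcases lay0 hu with h1' | ⟨k, hk⟩
    · exact absurd h1' h1
    · rw [sigm_b1 hinj₁, sigm_of (fun j hj => h1 ⟨j, hj⟩)] at h
      exact absurd (h.symm.trans hk.symm) (hc₀ i k)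
  · rwa [sigm_of (fun j hj => h1 ⟨j, hj⟩), sigm_of (fun j hj => h2 ⟨j, hj⟩)] at h

lemma DD_le {u v : V} {k : Fin n} (h : DD R cbar b₀ b₁ f u v k) :
    lay cbar b₀ b₁ u ≤ lay cbar b₀ b₁ v := by
  unfold DD at h
  split at h
  · exact le_of_eq ‹_›
  · exact le_of_lt h

lemma DD0 {u v : V} {k : Fin n} (hu : lay cbar b₀ b₁ u = 0) (hv : lay cbar b₀ b₁ v = 0) :
    DD R cbar b₀ b₁ f u v k ↔ R (sigm b₀ b₁ u) (sigm b₀ b₁ v) (b₁ k) := by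
  unfold DD
  rw [hu, hv, if_pos rfl, if_pos rfl]

lemma DD_lt {u v : V} {k : Fin n} (h : lay cbar b₀ b₁ u < lay cbar b₀ b₁ v) :
    DD R cbar b₀ b₁ f u v k := by
  unfold DD
  rw [if_neg (Nat.ne_of_lt h)]
  exact h

lemma DD_const {u v : V} {k k' : Fin n}
    (h : ¬(lay cbar b₀ b₁ u = 0 ∧ lay cbar b₀ b₁ v = 0)) :
    DD R cbar b₀ b₁ f u v k ↔ DD R cbar b₀ b₁ f u v k' := by
  unfold DD
  split
  · next he =>
    have h0 : ¬ lay cbar b₀ b₁ u = 0 := fun h0 => h ⟨h0, he ▸ h0⟩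
    rw [if_neg h0, if_neg h0]
  · rfl

lemma DD_asymm (hHT : IsHT R) (hinj₀ : Function.Injective b₀)
    (hinj₁ : Function.Injective b₁) (hdisj : ∀ i j, b₀ i ≠ b₁ j)
    (hc₀ : ∀ i k, b₀ i ≠ cbar k) (hf : Function.Injective f) {u v : V} {k : Fin n}
    (huv : u ≠ v) (h1 : DD R cbar b₀ b₁ f u v k) (h2 : DD R cbar b₀ b₁ f v u k) :
    False := by
  have he : lay cbar b₀ b₁ u = lay cbar b₀ b₁ v :=
    le_antisymm (DD_le h1) (DD_le h2)
  by_cases h0 : lay cbar b₀ b₁ u = 0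
  · have h0' : lay cbar b₀ b₁ v = 0 := he ▸ h0
    rw [DD0 h0 h0'] at h1
    rw [DD0 h0' h0] at h2
    have hsne : sigm b₀ b₁ u ≠ sigm b₀ b₁ v :=
      fun hs => huv (sigm_inj0 hinj₀ hinj₁ hc₀ h0 h0' hs)
    exact (hHT.2.2 (sigm b₀ b₁ u) (sigm b₀ b₁ v) (b₁ k) hsne
      (sigm_ne_b1 hdisj v k) (sigm_ne_b1 hdisj u k)).mpr
      (hHT.2.1 _ _ _ (hHT.2.1 _ _ _ h2)) h1
  · unfold DD at h1 h2
    rw [if_pos he, if_neg h0] at h1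
    rw [if_pos he.symm, if_neg (he ▸ h0)] at h2
    exact lt_asymm h1 h2

lemma DD_total (hHT : IsHT R) (hinj₀ : Function.Injective b₀)
    (hinj₁ : Function.Injective b₁) (hdisj : ∀ i j, b₀ i ≠ b₁ j)
    (hc₀ : ∀ i k, b₀ i ≠ cbar k) (hf : Function.Injective f) {u v : V} {k : Fin n}
    (huv : u ≠ v) (h : ¬ DD R cbar b₀ b₁ f u v k) : DD R cbar b₀ b₁ f v u k := by
  by_cases he : lay cbar b₀ b₁ u = lay cbar b₀ b₁ v
  · by_cases h0 : lay cbar b₀ b₁ u = 0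
    · have h0' : lay cbar b₀ b₁ v = 0 := he ▸ h0
      rw [DD0 h0 h0'] at h
      rw [DD0 h0' h0]
      have hsne : sigm b₀ b₁ u ≠ sigm b₀ b₁ v :=
        fun hs => huv (sigm_inj0 hinj₀ hinj₁ hc₀ h0 h0' hs)
      exact hHT.2.1 _ _ _ ((hHT.2.2 (sigm b₀ b₁ u) (sigm b₀ b₁ v) (b₁ k) hsne
        (sigm_ne_b1 hdisj v k) (sigm_ne_b1 hdisj u k)).mp h)
    · unfold DD at h ⊢
      rw [if_pos he, if_neg h0] at h
      rw [if_pos he.symm, if_neg (he ▸ h0)]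
      exact lt_of_le_of_ne (not_lt.mp h) (fun e => huv ((hf e).symm))
  · unfold DD at h ⊢
    rw [if_neg he] at h
    rw [if_neg (Ne.symm he)]
    have h1 := not_lt.mp h
    omega

lemma DD_cycle (hf : Function.Injective f) {u v w : V} {k : Fin n}
    (h1 : DD R cbar b₀ b₁ f u v k) (h2 : DD R cbar b₀ b₁ f v w k)
    (h3 : DD R cbar b₀ b₁ f w u k) :
    lay cbar b₀ b₁ u = 0 ∧ lay cbar b₀ b₁ v = 0 ∧ lay cbar b₀ b₁ w = 0 := by
  have e1 := DD_le h1
  have e2 := DD_le h2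
  have e3 := DD_le h3
  have huv : lay cbar b₀ b₁ u = lay cbar b₀ b₁ v := le_antisymm e1 (le_trans e2 e3)
  have hvw : lay cbar b₀ b₁ v = lay cbar b₀ b₁ w := le_antisymm e2 (le_trans e3 e1)
  by_cases h0 : lay cbar b₀ b₁ u = 0
  · exact ⟨h0, huv ▸ h0, (huv.trans hvw) ▸ h0⟩
  · exfalso
    unfold DD at h1 h2 h3
    rw [if_pos huv, if_neg h0] at h1
    rw [if_pos hvw, if_neg (huv ▸ h0)] at h2
    rw [if_pos ((huv.trans hvw).symm), if_neg ((huv.trans hvw) ▸ h0)] at h3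
    omega


variable (R cbar b₀ b₁ f) in
lemma RR_isHT (hHT : IsHT R) (hinj₀ : Function.Injective b₀) (hinj₁ : Function.Injective b₁)
    (hdisj : ∀ i j, b₀ i ≠ b₁ j) (hc₀ : ∀ i k, b₀ i ≠ cbar k)
    (hf : Function.Injective f) : IsHT (RR R cbar b₀ b₁ f) := by
  have ht : ∀ (u v : V) (k : Fin n), u ≠ v →
      (¬(u ≠ v ∧ DD R cbar b₀ b₁ f u v k) ↔ (v ≠ u ∧ DD R cbar b₀ b₁ f v u k)) := by
    intro u v k huv
    constructor
    · intro h
      exact ⟨huv.symm, DD_total hHT hinj₀ hinj₁ hdisj hc₀ hf huv (fun hD => h ⟨huv, hD⟩)⟩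
    · rintro ⟨-, hD⟩ ⟨-, hD'⟩
      exact DD_asymm hHT hinj₀ hinj₁ hdisj hc₀ hf huv hD' hD
  have hr : ∀ (u : V) (p q : Fin n), p ≠ q →
      (¬(p ≠ q ∧ R (sigm b₀ b₁ u) (b₁ p) (b₁ q)) ↔
        (q ≠ p ∧ R (sigm b₀ b₁ u) (b₁ q) (b₁ p))) := by
    intro u p q hpq
    have d1 : sigm b₀ b₁ u ≠ b₁ p := sigm_ne_b1 hdisj u p
    have d2 : b₁ p ≠ b₁ q := fun e => hpq (hinj₁ e)
    have d3 : sigm b₀ b₁ u ≠ b₁ q := sigm_ne_b1 hdisj u q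
    constructor
    · intro h
      have hnR : ¬ R (sigm b₀ b₁ u) (b₁ p) (b₁ q) := fun hR => h ⟨hpq, hR⟩
      have := (hHT.2.2 _ _ _ d1 d2 d3).mp hnR
      exact ⟨hpq.symm, hHT.2.1 _ _ _ (hHT.2.1 _ _ _ this)⟩
    · rintro ⟨-, hR'⟩ ⟨-, hR⟩
      exact (hHT.2.2 _ _ _ d1 d2 d3).mpr (hHT.2.1 _ _ _ hR') hR
  refine ⟨?_, ?_, ?_⟩
  · rintro (a|a) (b|b) (c|c) h
    · obtain ⟨h1, h2, h3⟩ := hHT.1 _ _ _ h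
      exact ⟨by simp [h1], by simp [h2], by simp [h3]⟩
    · exact ⟨by simp [h.1], by simp, by simp⟩
    · exact ⟨by simp, by simp, by simp [Ne.symm h.1]⟩
    · exact ⟨by simp, by simp [h.1], by simp⟩
    · exact ⟨by simp, by simp [h.1], by simp⟩
    · exact ⟨by simp, by simp, by simp [Ne.symm h.1]⟩
    · exact ⟨by simp [h.1], by simp, by simp⟩
    · obtain ⟨h1, h2, h3⟩ := hHT.1 _ _ _ h
      refine ⟨?_, ?_, ?_⟩
      · simp only [ne_eq, Sum.inr.injEq]; exact fun e => h1 (by rw [e])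
      · simp only [ne_eq, Sum.inr.injEq]; exact fun e => h2 (by rw [e])
      · simp only [ne_eq, Sum.inr.injEq]; exact fun e => h3 (by rw [e])
  · rintro (a|a) (b|b) (c|c) h
    · exact hHT.2.1 _ _ _ h
    · exact h
    · exact h
    · exact h
    · exact h
    · exact h
    · exact h
    · exact hHT.2.1 _ _ _ h
  · rintro (a|a) (b|b) (c|c) hab hbc hac
    · exact hHT.2.2 a b c (by simpa using hab) (by simpa using hbc) (by simpa using hac)
    · exact ht a b c (by simpa using hab)
    · exact ht c a b (Ne.symm (by simpa using hac))
    · exact hr a b c (by simpa using hbc)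
    · exact ht b c a (by simpa using hbc)
    · exact hr b c a (Ne.symm (by simpa using hac))
    · exact hr c a b (by simpa using hab)
    · exact hHT.2.2 (b₁ a) (b₁ b) (b₁ c)
        (fun e => (by simpa using hab : a ≠ b) (hinj₁ e))
        (fun e => (by simpa using hbc : b ≠ c) (hinj₁ e))
        (fun e => (by simpa using hac : a ≠ c) (hinj₁ e))

/-- The "view" of the index type for the new tuple pair. -/
def TT (cbar : Fin m → V) (b₁ : Fin n → V) : (Fin n ⊕ Fin m) ⊕ Fin n → V ⊕ Fin n :=
  Sum.elim (fun e => Sum.inl (Sum.elim b₁ cbar e)) Sum.inr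

def AA (cbar : Fin m → V) (b₀ b₁ : Fin n → V) : (Fin n ⊕ Fin m) ⊕ Fin n → V :=
  Sum.elim (Sum.elim b₀ cbar) b₁

lemma elim_lay0 (e : Fin n ⊕ Fin m) : lay cbar b₀ b₁ (Sum.elim b₁ cbar e) = 0 := by
  cases e
  · exact lay_b1 _
  · exact lay_c _

lemma elim_sigm (hinj₁ : Function.Injective b₁) (hc₁ : ∀ i k, b₁ i ≠ cbar k)
    (e : Fin n ⊕ Fin m) : sigm b₀ b₁ (Sum.elim b₁ cbar e) = Sum.elim b₀ cbar e := by
  cases e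
  · exact sigm_b1 hinj₁ _
  · exact sigm_of (fun i h => hc₁ i _ h)

lemma master (hHT : IsHT R) (hinj₁ : Function.Injective b₁)
    (hc₁ : ∀ i k, b₁ i ≠ cbar k) (htp : SameQF R cbar b₀ b₁)
    (p q r : (Fin n ⊕ Fin m) ⊕ Fin n) :
    RR R cbar b₀ b₁ f (TT cbar b₁ p) (TT cbar b₁ q) (TT cbar b₁ r) ↔
      R (AA cbar b₀ b₁ p) (AA cbar b₀ b₁ q) (AA cbar b₀ b₁ r) := by
  have hcyc : ∀ x y z : V, R x y z ↔ R y z x :=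
    fun x y z => ⟨hHT.2.1 x y z, fun h => hHT.2.1 _ _ _ (hHT.2.1 _ _ _ h)⟩
  have hnee : ∀ e e' : Fin n ⊕ Fin m, Sum.elim b₁ cbar e = Sum.elim b₁ cbar e' →
      Sum.elim b₀ cbar e = Sum.elim b₀ cbar e' := by
    intro e e' h
    rw [← elim_sigm hinj₁ hc₁ e, ← elim_sigm hinj₁ hc₁ e', h]
  rcases p with e1 | j1 <;> rcases q with e2 | j2 <;> rcases r with e3 | j3
  · exact (htp.2.2 e1 e2 e3).symm
  · show (Sum.elim b₁ cbar e1 ≠ Sum.elim b₁ cbar e2 ∧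
        DD R cbar b₀ b₁ f (Sum.elim b₁ cbar e1) (Sum.elim b₁ cbar e2) j3) ↔
      R (Sum.elim b₀ cbar e1) (Sum.elim b₀ cbar e2) (b₁ j3)
    rw [DD0 (elim_lay0 e1) (elim_lay0 e2), elim_sigm hinj₁ hc₁, elim_sigm hinj₁ hc₁]
    exact ⟨fun h => h.2, fun h => ⟨fun e => (hHT.1 _ _ _ h).1 (hnee _ _ e), h⟩⟩
  · show (Sum.elim b₁ cbar e3 ≠ Sum.elim b₁ cbar e1 ∧
        DD R cbar b₀ b₁ f (Sum.elim b₁ cbar e3) (Sum.elim b₁ cbar e1) j2) ↔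
      R (Sum.elim b₀ cbar e1) (b₁ j2) (Sum.elim b₀ cbar e3)
    rw [DD0 (elim_lay0 e3) (elim_lay0 e1), elim_sigm hinj₁ hc₁, elim_sigm hinj₁ hc₁]
    rw [hcyc (Sum.elim b₀ cbar e3) (Sum.elim b₀ cbar e1) (b₁ j2)]
    rw [hcyc (Sum.elim b₀ cbar e1) (b₁ j2) (Sum.elim b₀ cbar e3)]
    exact ⟨fun h => h.2, fun h => ⟨fun e => (hHT.1 _ _ _ h).2.1 (hnee _ _ e), h⟩⟩
  · show (j2 ≠ j3 ∧ R (sigm b₀ b₁ (Sum.elim b₁ cbar e1)) (b₁ j2) (b₁ j3)) ↔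
      R (Sum.elim b₀ cbar e1) (b₁ j2) (b₁ j3)
    rw [elim_sigm hinj₁ hc₁]
    exact ⟨fun h => h.2, fun h => ⟨fun e => (hHT.1 _ _ _ h).2.1 (by rw [e]), h⟩⟩
  · show (Sum.elim b₁ cbar e2 ≠ Sum.elim b₁ cbar e3 ∧
        DD R cbar b₀ b₁ f (Sum.elim b₁ cbar e2) (Sum.elim b₁ cbar e3) j1) ↔
      R (b₁ j1) (Sum.elim b₀ cbar e2) (Sum.elim b₀ cbar e3)
    rw [DD0 (elim_lay0 e2) (elim_lay0 e3), elim_sigm hinj₁ hc₁, elim_sigm hinj₁ hc₁]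
    rw [hcyc (b₁ j1) (Sum.elim b₀ cbar e2) (Sum.elim b₀ cbar e3)]
    exact ⟨fun h => h.2, fun h => ⟨fun e => (hHT.1 _ _ _ h).1 (hnee _ _ e), h⟩⟩
  · show (j3 ≠ j1 ∧ R (sigm b₀ b₁ (Sum.elim b₁ cbar e2)) (b₁ j3) (b₁ j1)) ↔
      R (b₁ j1) (Sum.elim b₀ cbar e2) (b₁ j3)
    rw [elim_sigm hinj₁ hc₁, hcyc (b₁ j1) (Sum.elim b₀ cbar e2) (b₁ j3)]
    exact ⟨fun h => h.2, fun h => ⟨fun e => (hHT.1 _ _ _ h).2.1 (by rw [e]), h⟩⟩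
  · show (j1 ≠ j2 ∧ R (sigm b₀ b₁ (Sum.elim b₁ cbar e3)) (b₁ j1) (b₁ j2)) ↔
      R (b₁ j1) (b₁ j2) (Sum.elim b₀ cbar e3)
    rw [elim_sigm hinj₁ hc₁,
      hcyc (Sum.elim b₀ cbar e3) (b₁ j1) (b₁ j2)]
    exact ⟨fun h => h.2, fun h => ⟨fun e => (hHT.1 _ _ _ h).1 (by rw [e]), h⟩⟩
  · exact Iff.rfl

variable (R cbar b₀ b₁ f) in
lemma RR_free (hHT : IsHT R) (hfree : H4Free R) (hinj₀ : Function.Injective b₀)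
    (hinj₁ : Function.Injective b₁) (hdisj : ∀ i j, b₀ i ≠ b₁ j)
    (hc₀ : ∀ i k, b₀ i ≠ cbar k) (hc₁ : ∀ i k, b₁ i ≠ cbar k)
    (htp : SameQF R cbar b₀ b₁) (hf : Function.Injective f) :
    H4Free (RR R cbar b₀ b₁ f) := by
  have hcyc : ∀ a b c, RR R cbar b₀ b₁ f a b c → RR R cbar b₀ b₁ f b c a :=
    (RR_isHT R cbar b₀ b₁ f hHT hinj₀ hinj₁ hdisj hc₀ hf).2.1
  let P : V ⊕ Fin n → V ⊕ Fin n → V ⊕ Fin n → V ⊕ Fin n → Prop := fun a b c d =>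
    RR R cbar b₀ b₁ f a b c ∧ RR R cbar b₀ b₁ f a c d ∧
      RR R cbar b₀ b₁ f a d b ∧ RR R cbar b₀ b₁ f b d c
  have rot : ∀ a b c d, P a b c d → P a c d b := fun a b c d h =>
    ⟨h.2.1, h.2.2.1, h.1, hcyc _ _ _ (hcyc _ _ _ h.2.2.2)⟩
  have swp : ∀ a b c d, P a b c d → P b a d c := fun a b c d h =>
    ⟨hcyc _ _ _ (hcyc _ _ _ h.2.2.1), h.2.2.2, hcyc _ _ _ h.1, h.2.1⟩
  have core4 : ∀ p q r s, P (.inr p) (.inr q) (.inr r) (.inr s) → False := by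
    rintro p q r s ⟨h1, h2, h3, h4⟩
    exact hfree (b₁ p) (b₁ q) (b₁ r) (b₁ s) ⟨h1, h2, h3, h4⟩
  have core3 : ∀ u p q r, P (.inl u) (.inr p) (.inr q) (.inr r) → False := by
    rintro u p q r ⟨h1, h2, h3, h4⟩
    exact hfree (sigm b₀ b₁ u) (b₁ p) (b₁ q) (b₁ r) ⟨h1.2, h2.2, h3.2, h4⟩
  have core2 : ∀ u v p q, P (.inl u) (.inl v) (.inr p) (.inr q) → False := by
    rintro u v p q ⟨h1, h2, h3, h4⟩
    by_cases h0 : lay cbar b₀ b₁ u = 0 ∧ lay cbar b₀ b₁ v = 0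
    · have e1 : R (sigm b₀ b₁ u) (sigm b₀ b₁ v) (b₁ p) := (DD0 h0.1 h0.2).mp h1.2
      have e3 : R (sigm b₀ b₁ v) (sigm b₀ b₁ u) (b₁ q) := (DD0 h0.2 h0.1).mp h3.2
      exact hfree (sigm b₀ b₁ u) (sigm b₀ b₁ v) (b₁ p) (b₁ q)
        ⟨e1, h2.2, hHT.2.1 _ _ _ e3, h4.2⟩
    · exact DD_asymm hHT hinj₀ hinj₁ hdisj hc₀ hf h1.1 h1.2
        ((DD_const (fun hh => h0 ⟨hh.2, hh.1⟩)).mp h3.2)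
  have core1 : ∀ u v w k, P (.inl u) (.inl v) (.inl w) (.inr k) → False := by
    rintro u v w k ⟨h1, h2, h3, h4⟩
    obtain ⟨l1, l2, l3⟩ := DD_cycle hf h2.2 h4.2 h3.2
    have e2 : R (sigm b₀ b₁ u) (sigm b₀ b₁ w) (b₁ k) := (DD0 l1 l2).mp h2.2
    have e3 : R (sigm b₀ b₁ v) (sigm b₀ b₁ u) (b₁ k) := (DD0 l3 l1).mp h3.2
    have e4 : R (sigm b₀ b₁ w) (sigm b₀ b₁ v) (b₁ k) := (DD0 l2 l3).mp h4.2
    have e1 : R (sigm b₀ b₁ u) (sigm b₀ b₁ v) (sigm b₀ b₁ w) :=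
      (subst0 hinj₁ hc₁ htp l1 l3 l2).mp h1
    exact hfree (sigm b₀ b₁ u) (sigm b₀ b₁ v) (sigm b₀ b₁ w) (b₁ k)
      ⟨e1, e2, hHT.2.1 _ _ _ e3, hHT.2.1 _ _ _ e4⟩
  have key : ∀ a b c d, P a b c d → False := by
    rintro (a|a) (b|b) (c|c) (d|d) h
    · exact hfree a b c d h
    · exact core1 a b c d h
    · exact core1 a d b c (rot _ _ _ _ (rot _ _ _ _ h))
    · exact core2 a b c d h
    · exact core1 a c d b (rot _ _ _ _ h)
    · exact core2 a c d b (rot _ _ _ _ h)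
    · exact core2 a d b c (rot _ _ _ _ (rot _ _ _ _ h))
    · exact core3 a b c d h
    · exact core1 b d c a (rot _ _ _ _ (swp _ _ _ _ h))
    · exact core2 b c a d (rot _ _ _ _ (rot _ _ _ _ (swp _ _ _ _ h)))
    · exact core2 b d c a (rot _ _ _ _ (swp _ _ _ _ h))
    · exact core3 b a d c (swp _ _ _ _ h)
    · exact core2 c d a b (rot _ _ _ _ (rot _ _ _ _ (swp _ _ _ _ (rot _ _ _ _ h))))
    · exact core3 c a b d (swp _ _ _ _ (rot _ _ _ _ h))
    · exact core3 d a c b (swp _ _ _ _ (rot _ _ _ _ (rot _ _ _ _ h)))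
    · exact core4 a b c d h
  intro a b c d h
  exact key a b c d h

end Stmt9Aux

/-- the extension step Σ(x̄) of the NSOP₄ proof: a finite H4-free
3-hypertournament with tuples `c̄`, `b̄₀`, `b̄₁` (with `b̄₀ ≡_C b̄₁` quantifier-freely)
extends to an H4-free 3-hypertournament with a new tuple `x̄` such that
(i) `(b̄₁, x̄) ≡_C (b̄₀, b̄₁)`, (ii) `R cᵢ b₀ⱼ x_k`, and (iii) `R b₀ᵢ xⱼ b₁ₖ`. -/
theorem stmt_9 {V : Type} [Finite V] (R : V → V → V → Prop)
    (hHT : IsHT R) (hfree : H4Free R)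
    {m n : ℕ} (cbar : Fin m → V) (b₀ b₁ : Fin n → V)
    (hinj₀ : Function.Injective b₀) (hinj₁ : Function.Injective b₁)
    (hdisj : ∀ i j, b₀ i ≠ b₁ j)
    (hc₀ : ∀ i k, b₀ i ≠ cbar k) (hc₁ : ∀ i k, b₁ i ≠ cbar k)
    (htp : SameQF R cbar b₀ b₁) :
    ∃ (W : Type) (_ : Finite W) (g : V → W) (R' : W → W → W → Prop) (x : Fin n → W),
      Function.Injective g ∧ IsHT R' ∧ H4Free R' ∧
        (∀ a b c : V, R a b c ↔ R' (g a) (g b) (g c)) ∧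
        (∀ (j : Fin n) (v : V), x j ≠ g v) ∧
        SameQF R' (g ∘ cbar) (Sum.elim (g ∘ b₀) (g ∘ b₁)) (Sum.elim (g ∘ b₁) x) ∧
        (∀ (i : Fin m) (j k : Fin n), R' (g (cbar i)) (g (b₀ j)) (x k)) ∧
        (∀ i j k : Fin n, R' (g (b₀ i)) (x j) (g (b₁ k))) := by
  classical
  obtain ⟨f, hf⟩ := Countable.exists_injective_nat V
  refine ⟨V ⊕ Fin n, inferInstance, Sum.inl, RR R cbar b₀ b₁ f, fun j => Sum.inr j,
    Sum.inl_injective,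
    RR_isHT R cbar b₀ b₁ f hHT hinj₀ hinj₁ hdisj hc₀ hf,
    RR_free R cbar b₀ b₁ f hHT hfree hinj₀ hinj₁ hdisj hc₀ hc₁ htp hf,
    fun a b c => Iff.rfl,
    fun j v => by simp,
    ?_, ?_, ?_⟩
  · refine ⟨?_, ?_, ?_⟩
    · rintro (i|i) (j|j)
      · simp only [Sum.elim_inl, Function.comp_apply, Sum.inl.injEq]
        rw [hinj₀.eq_iff, hinj₁.eq_iff]
      · exact iff_of_false (by simp [hdisj i j]) (by simp)
      · exact iff_of_false (by simp [(hdisj j i).symm]) (by simp)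
      · simp only [Sum.elim_inr, Function.comp_apply, Sum.inl.injEq, Sum.inr.injEq]
        rw [hinj₁.eq_iff]
    · rintro (i|i) k
      · exact iff_of_false (by simp [hc₀ i k]) (by simp [hc₁ i k])
      · exact iff_of_false (by simp [hc₁ i k]) (by simp)
    · intro u v w
      rcases u with (i1|i1)|i1 <;> rcases v with (i2|i2)|i2 <;> rcases w with (i3|i3)|i3
      · exact (master hHT hinj₁ hc₁ htp (.inl (.inl i1)) (.inl (.inl i2)) (.inl (.inl i3))).symm
      · exact (master hHT hinj₁ hc₁ htp (.inl (.inl i1)) (.inl (.inl i2)) (.inr i3)).symm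
      · exact (master hHT hinj₁ hc₁ htp (.inl (.inl i1)) (.inl (.inl i2)) (.inl (.inr i3))).symm
      · exact (master hHT hinj₁ hc₁ htp (.inl (.inl i1)) (.inr i2) (.inl (.inl i3))).symm
      · exact (master hHT hinj₁ hc₁ htp (.inl (.inl i1)) (.inr i2) (.inr i3)).symm
      · exact (master hHT hinj₁ hc₁ htp (.inl (.inl i1)) (.inr i2) (.inl (.inr i3))).symm
      · exact (master hHT hinj₁ hc₁ htp (.inl (.inl i1)) (.inl (.inr i2)) (.inl (.inl i3))).symm
      · exact (master hHT hinj₁ hc₁ htp (.inl (.inl i1)) (.inl (.inr i2)) (.inr i3)).symm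
      · exact (master hHT hinj₁ hc₁ htp (.inl (.inl i1)) (.inl (.inr i2)) (.inl (.inr i3))).symm
      · exact (master hHT hinj₁ hc₁ htp (.inr i1) (.inl (.inl i2)) (.inl (.inl i3))).symm
      · exact (master hHT hinj₁ hc₁ htp (.inr i1) (.inl (.inl i2)) (.inr i3)).symm
      · exact (master hHT hinj₁ hc₁ htp (.inr i1) (.inl (.inl i2)) (.inl (.inr i3))).symm
      · exact (master hHT hinj₁ hc₁ htp (.inr i1) (.inr i2) (.inl (.inl i3))).symm
      · exact (master hHT hinj₁ hc₁ htp (.inr i1) (.inr i2) (.inr i3)).symm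
      · exact (master hHT hinj₁ hc₁ htp (.inr i1) (.inr i2) (.inl (.inr i3))).symm
      · exact (master hHT hinj₁ hc₁ htp (.inr i1) (.inl (.inr i2)) (.inl (.inl i3))).symm
      · exact (master hHT hinj₁ hc₁ htp (.inr i1) (.inl (.inr i2)) (.inr i3)).symm
      · exact (master hHT hinj₁ hc₁ htp (.inr i1) (.inl (.inr i2)) (.inl (.inr i3))).symm
      · exact (master hHT hinj₁ hc₁ htp (.inl (.inr i1)) (.inl (.inl i2)) (.inl (.inl i3))).symm
      · exact (master hHT hinj₁ hc₁ htp (.inl (.inr i1)) (.inl (.inl i2)) (.inr i3)).symm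
      · exact (master hHT hinj₁ hc₁ htp (.inl (.inr i1)) (.inl (.inl i2)) (.inl (.inr i3))).symm
      · exact (master hHT hinj₁ hc₁ htp (.inl (.inr i1)) (.inr i2) (.inl (.inl i3))).symm
      · exact (master hHT hinj₁ hc₁ htp (.inl (.inr i1)) (.inr i2) (.inr i3)).symm
      · exact (master hHT hinj₁ hc₁ htp (.inl (.inr i1)) (.inr i2) (.inl (.inr i3))).symm
      · exact (master hHT hinj₁ hc₁ htp (.inl (.inr i1)) (.inl (.inr i2)) (.inl (.inl i3))).symm
      · exact (master hHT hinj₁ hc₁ htp (.inl (.inr i1)) (.inl (.inr i2)) (.inr i3)).symm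
      · exact (master hHT hinj₁ hc₁ htp (.inl (.inr i1)) (.inl (.inr i2)) (.inl (.inr i3))).symm
  · intro i j k
    exact ⟨fun e => hc₀ j i e.symm, DD_lt (by rw [lay_c, lay_b0 hdisj hc₀]; norm_num)⟩
  · intro i j k
    exact ⟨fun e => hdisj i k e.symm, DD_lt (by rw [lay_b1, lay_b0 hdisj hc₀]; norm_num)⟩
end

section
/- If an independence relation ⫝ on subsets of a monster model satisfies right monotonicity, then the relation ⫝* defined by A ⫝*_C B iff for all B' ⊇ B there exists A' ≡_{BC} A with A' ⫝_C B', satisfies right monotonicity and right extension. -/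
/- Abstract setting: the monster model is a type `Ω` together with its automorphism
group, abstracted as a subgroup `G` of `Equiv.Perm Ω`. Having the same type over a set
`X` is rendered, as in a strongly homogeneous monster model, by the existence of an
automorphism fixing `X` pointwise. -/

/-- `A ≡_X B`: some automorphism in `G` fixing `X` pointwise maps `A` onto `B`. -/
def Eqv {Ω : Type*} (G : Subgroup (Equiv.Perm Ω)) (X A B : Set Ω) : Prop :=
  ∃ σ : Equiv.Perm Ω, σ ∈ G ∧ (∀ x ∈ X, σ x = x) ∧ σ '' A = B

/-- Invariance of an independence relation under the automorphism group. -/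
def GInvariant {Ω : Type*} (G : Subgroup (Equiv.Perm Ω))
    (Ind : Set Ω → Set Ω → Set Ω → Prop) : Prop :=
  ∀ σ : Equiv.Perm Ω, σ ∈ G → ∀ A C B : Set Ω, Ind A C B → Ind (σ '' A) (σ '' C) (σ '' B)

/-- The operation `⫝*`: `A ⫝*_C B` iff for all `B' ⊇ B` there is `A' ≡_{BC} A` with
`A' ⫝_C B'`. -/
def IndStar {Ω : Type*} (G : Subgroup (Equiv.Perm Ω)) (Ind : Set Ω → Set Ω → Set Ω → Prop)
    (A C B : Set Ω) : Prop :=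
  ∀ B' : Set Ω, B ⊆ B' → ∃ A' : Set Ω, Eqv G (B ∪ C) A A' ∧ Ind A' C B'

/-- Right monotonicity. -/
def RightMono {Ω : Type*} (Ind : Set Ω → Set Ω → Set Ω → Prop) : Prop :=
  ∀ A C B B' : Set Ω, Ind A C B → B' ⊆ B → Ind A C B'

/-- Right extension. -/
def RightExt {Ω : Type*} (G : Subgroup (Equiv.Perm Ω))
    (Ind : Set Ω → Set Ω → Set Ω → Prop) : Prop :=
  ∀ A C B B' : Set Ω, Ind A C B → B ⊆ B' → ∃ A' : Set Ω, Eqv G (B ∪ C) A A' ∧ Ind A' C B'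

/-- if an independence relation satisfies right monotonicity, then `⫝*`
satisfies right monotonicity and right extension. -/
theorem stmt_10 {Ω : Type*} (G : Subgroup (Equiv.Perm Ω))
    (Ind : Set Ω → Set Ω → Set Ω → Prop)
    (hInv : GInvariant G Ind) (hMono : RightMono Ind) :
    RightMono (IndStar G Ind) ∧ RightExt G (IndStar G Ind) := by
  constructor
  · -- right monotonicity of ⫝*
    intro A C B B' h hsub D hD
    obtain ⟨A₁, ⟨σ, hσG, hfix, him⟩, hind⟩ := h (D ∪ B) Set.subset_union_right
    refine ⟨A₁, ⟨σ, hσG, ?_, him⟩, hMono A₁ C (D ∪ B) D hind Set.subset_union_left⟩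
    intro x hx
    refine hfix x ?_
    rcases hx with hx | hx
    · exact Or.inl (hsub hx)
    · exact Or.inr hx
  · -- right extension of ⫝*
    intro A C B B' h _hsub
    obtain ⟨A', heqv, hind⟩ := h Set.univ (Set.subset_univ _)
    refine ⟨A', heqv, ?_⟩
    intro D _hD
    exact ⟨A', ⟨1, one_mem G, fun x _ => rfl, by simp⟩,
      hMono A' C Set.univ D hind (Set.subset_univ _)⟩
end

section
/- If an independence relation ⫝ satisfies left monotonicity (A ⫝_C B and A' ⊆ A imply A' ⫝_C B), then ⫝^{le}, defined by A ⫝^{le}_C B iff for all D ⊇ A there is B' ≡_{AC} B with D ⫝_C B', satisfies both left monotonicity and left extension. -/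
/-- The left-extension closure: `A ⫝^{le}_C B` iff for all `D ⊇ A` there is
`B' ≡_{AC} B` with `D ⫝_C B'`. -/
def IndLe {Ω : Type*} (G : Subgroup (Equiv.Perm Ω)) (Ind : Set Ω → Set Ω → Set Ω → Prop)
    (A C B : Set Ω) : Prop :=
  ∀ D : Set Ω, A ⊆ D → ∃ B' : Set Ω, Eqv G (A ∪ C) B B' ∧ Ind D C B'

/-- Left monotonicity. -/
def LeftMono {Ω : Type*} (Ind : Set Ω → Set Ω → Set Ω → Prop) : Prop :=
  ∀ A A' C B : Set Ω, Ind A C B → A' ⊆ A → Ind A' C B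

/-- Left extension. -/
def LeftExt {Ω : Type*} (G : Subgroup (Equiv.Perm Ω))
    (Ind : Set Ω → Set Ω → Set Ω → Prop) : Prop :=
  ∀ A A' C B : Set Ω, Ind A C B → A ⊆ A' →
    ∃ B' : Set Ω, Eqv G (A ∪ C) B B' ∧ Ind A' C B'

/-- if an independence relation satisfies left monotonicity, then `⫝^{le}`
satisfies left monotonicity and left extension. -/
theorem stmt_12 {Ω : Type*} (G : Subgroup (Equiv.Perm Ω))
    (Ind : Set Ω → Set Ω → Set Ω → Prop)
    (hInv : GInvariant G Ind) (hMono : LeftMono Ind) :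
    LeftMono (IndLe G Ind) ∧ LeftExt G (IndLe G Ind) := by
  constructor
  · intro A A' C B h hA' D hD
    obtain ⟨B', ⟨σ, hσG, hfix, him⟩, hind⟩ := h (D ∪ A) Set.subset_union_right
    exact ⟨B', ⟨σ, hσG, fun x hx => hfix x (hx.imp (fun h => hA' h) id), him⟩,
      hMono _ _ _ _ hind Set.subset_union_left⟩
  · intro A A' C B h hAA'
    obtain ⟨B', heqv, hind⟩ := h Set.univ (Set.subset_univ A)
    refine ⟨B', heqv, fun D hD => ⟨B', ⟨1, one_mem G, fun x _ => rfl, by simp⟩,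
      hMono _ _ _ _ hind (Set.subset_univ D)⟩⟩
end

section
/- In the monster model of the theory of the H4-free 3-hypertournament, the relation ⫝^{ht} defined by A ⫝^{ht}_C B iff A ∩ B ⊆ C and R(a, c, b) holds for all a ∈ A∖C, c ∈ C, b ∈ B∖C, is not symmetric: if A ⫝^{ht}_C B with C nonempty, C ⊊ A, C ⊊ B, then B ⫝̸^{ht}_C A. -/
/-- `A ⫝^{ht}_C B` iff `A ∩ B ⊆ C` and `R a c b` for all `a ∈ A∖C`, `c ∈ C`,
`b ∈ B∖C`. -/
def IndHT {V : Type*} (R : V → V → V → Prop) (A C B : Set V) : Prop :=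
  A ∩ B ⊆ C ∧ ∀ a ∈ A \ C, ∀ c ∈ C, ∀ b ∈ B \ C, R a c b

/-- in (the monster model of the theory of) the H4-free 3-hypertournament,
`⫝^{ht}` is not symmetric: if `A ⫝^{ht}_C B` with `C` nonempty and `C ⊊ A`, `C ⊊ B`,
then `¬ B ⫝^{ht}_C A`. -/
theorem stmt_17 {V : Type*} (R : V → V → V → Prop) (hHT : IsHT R) (hfree : H4Free R)
    (A B C : Set V) (hCA : C ⊂ A) (hCB : C ⊂ B) (hC : C.Nonempty)
    (h : IndHT R A C B) : ¬ IndHT R B C A := by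
  rintro ⟨_, h'⟩
  obtain ⟨a, haA, haC⟩ := Set.exists_of_ssubset hCA
  obtain ⟨b, hbB, hbC⟩ := Set.exists_of_ssubset hCB
  obtain ⟨c, hcC⟩ := hC
  have hacb : R a c b := h.2 a ⟨haA, haC⟩ c hcC b ⟨hbB, hbC⟩
  have hbca : R b c a := h' b ⟨hbB, hbC⟩ c hcC a ⟨haA, haC⟩
  obtain ⟨hab, _, _⟩ := hHT.1 a c b hacb
  have hac : a ≠ c := fun e => haC (e ▸ hcC)
  have hbc : b ≠ c := fun e => hbC (e ▸ hcC)
  have hABne : a ≠ b := fun e => hbC (h.1 ⟨e ▸ haA, hbB⟩)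
  exact (hHT.2.2 b c a hbc hac.symm hABne.symm).mpr hacb hbca
end

section
/- No global 1-type in the theory of the H4-free 3-hypertournament is invariant under all automorphisms of the monster model: for any monster model 𝕄 of T_{H4-free}, there is no complete 1-type p over 𝕄 such that σ(p) = p for all σ ∈ Aut(𝕄). -/
/-- `σ` is an automorphism of the 3-hypertournament `(V, R)`. -/
def IsAuto {V : Type*} (R : V → V → V → Prop) (σ : Equiv.Perm V) : Prop :=
  ∀ a b c : V, R a b c ↔ R (σ a) (σ b) (σ c)

/- STATEMENT 19. Semantic setting: `(V, R)` is the monster model of `T_{H4-free}`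
(infinite; by strong homogeneity and QE any two distinct points can be swapped by an
automorphism, hypothesis `hHom`). Since the theory has QE, a complete global 1-type is
rendered by the data of which atomic formulas `x = a` (the predicate `e`) and
`R(x, a, b)` (the predicate `t`) it contains, subject to completeness and finite
satisfiability in the monster. Conclusion: no such global 1-type is invariant under all
automorphisms. -/
theorem stmt_19 {V : Type*} [Infinite V] (R : V → V → V → Prop)
    (hHT : IsHT R) (hfree : H4Free R)
    (hHom : ∀ a b : V, a ≠ b → ∃ σ : Equiv.Perm V, IsAuto R σ ∧ σ a = b ∧ σ b = a) :
    ¬ ∃ (e : V → Prop) (t : V → V → Prop),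
        -- `(e, t)` is a complete global 1-type: every finite fragment is realized in `V`
        (∀ F : Finset V, ∃ x : V,
          (∀ a ∈ F, (e a ↔ x = a)) ∧ (∀ a ∈ F, ∀ b ∈ F, (t a b ↔ R x a b))) ∧
        -- the type is invariant under all automorphisms
        (∀ σ : Equiv.Perm V, IsAuto R σ →
          (∀ a, e a ↔ e (σ a)) ∧ (∀ a b, t a b ↔ t (σ a) (σ b))) := by
  rintro ⟨e, t, hfin, hinv⟩
  classical
  obtain ⟨hirr, hcyc, hcmp⟩ := hHT
  -- pick two distinct points
  obtain ⟨a, b, hab⟩ : ∃ a b : V, a ≠ b := by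
    obtain ⟨a, b, h⟩ := Infinite.instNontrivial V
    exact ⟨a, b, h⟩
  obtain ⟨σ, hσ, hσa, hσb⟩ := hHom a b hab
  -- e never holds
  have he : ∀ c : V, ¬ e c := by
    intro c hc
    obtain ⟨d, hd⟩ := exists_ne c
    have hcd : c ≠ d := Ne.symm hd
    obtain ⟨τ, hτ, hτc, hτd⟩ := hHom c d hcd
    have hed : e d := by
      have := (hinv τ hτ).1 c
      rw [hτc] at this
      exact this.mp hc
    obtain ⟨x, hxe, _⟩ := hfin {c, d}
    have h1 : x = c := (hxe c (by simp)).mp hc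
    have h2 : x = d := (hxe d (by simp)).mp hed
    exact hcd (h1 ▸ h2)
  -- realize the fragment {a, b}
  obtain ⟨x, hxe, hxt⟩ := hfin {a, b}
  have hxa : x ≠ a := fun h => he a ((hxe a (by simp)).mpr h)
  have hxb : x ≠ b := fun h => he b ((hxe b (by simp)).mpr h)
  have h1 : t a b ↔ R x a b := hxt a (by simp) b (by simp)
  have h2 : t b a ↔ R x b a := hxt b (by simp) a (by simp)
  have hsw : t a b ↔ t b a := by
    have := (hinv σ hσ).2 a b
    rw [hσa, hσb] at this
    exact this
  -- R x a b ↔ ¬ R x b a, contradiction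
  have hkey : ¬ R x a b ↔ R x b a := by
    constructor
    · intro h
      have := (hcmp x a b hxa hab hxb).mp h
      exact hcyc _ _ _ (hcyc _ _ _ this)
    · intro h hxab
      exact (hcmp x a b hxa hab hxb).mpr (hcyc _ _ _ h) hxab
  by_cases hR : R x a b
  · exact hkey.mpr ((h2.mp (hsw.mp (h1.mpr hR)))) hR
  · exact hR (h1.mp (hsw.mpr (h2.mpr (hkey.mp hR))))
end
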